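/- arXiv:2511.04449 — 7 statements merged into one kernel-verified Lean document; each statement's English description precedes it below -/
import Mathlib

section
/- If an F₁-loop (ω_1, ω̄_1, ω_2, ω̄_2, …, ω_m, ω̄_m) is F₂-covered, then for every function f from the set of states of the loop to (0, ∞) that is F₂-measurable (f(ω) = f(ω') whenever ω, ω' are states of the loop with F₂(ω) = F₂(ω')), one has ∏_{j=1}^m f(ω_j)/f(ω̄_j) = 1. -/
open scoped Classical

namespace Oracles

variable {Ω : Type}

/-- Two states lie in the same common knowledge component (CKC) iff they are related
by the join (finest common coarsening) of the players' information partitions. -/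
def ckcRel {n : ℕ} (Pl : Fin n → Setoid Ω) (ω ω' : Ω) : Prop :=
  (⨆ i, Pl i).r ω ω'

/-- An `F`-loop: a cyclic sequence of `m ≥ 2` pairs of states `(x j, y j)`. -/
structure IsLoop {n : ℕ} (Pl : Fin n → Setoid Ω) (F : Setoid Ω)
    (m : ℕ) (x y : ZMod m → Ω) : Prop where
  two_le : 2 ≤ m
  pair_ne : ∀ j, x j ≠ y j
  pair_ckc : ∀ j, ckcRel Pl (x j) (y j)
  link : ∀ j, F.r (y j) (x (j + 1))
  ckc_ne : ∀ j, ¬ ckcRel Pl (x j) (x (j + 1))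
  link_disjoint : ∀ j k : ZMod m, j ≠ k →
    ({y j, x (j + 1)} : Set Ω) ∩ {y k, x (k + 1)} = ∅

/-- The set of states of a loop. -/
def loopStates {m : ℕ} (x y : ZMod m → Ω) : Set Ω :=
  Set.range x ∪ Set.range y

/-- `F` refines `F'` in every CKC. -/
def RefinesInCKC {n : ℕ} (Pl : Fin n → Setoid Ω) (F F' : Setoid Ω) : Prop :=
  ∀ ω ω', ckcRel Pl ω ω' → F.r ω ω' → F'.r ω ω'

/-- A loop is `F'`-non-informative if both states of each of its pairs lie in the
same block of `F'`. -/
def NonInformative (F' : Setoid Ω) {m : ℕ} (x y : ZMod m → Ω) : Prop :=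
  ∀ j, F'.r (x j) (y j)

/-- A loop is `F'`-fully-informative if the states of each pair lie in different
blocks of `F'`. -/
def FullyInformative (F' : Setoid Ω) {m : ℕ} (x y : ZMod m → Ω) : Prop :=
  ∀ j, ¬ F'.r (x j) (y j)

/-- A loop is `F'`-informative if the states of at least one pair lie in different
blocks of `F'`. -/
def Informative (F' : Setoid Ω) {m : ℕ} (x y : ZMod m → Ω) : Prop :=
  ∃ j, ¬ F'.r (x j) (y j)

/-- A loop is irreducible if no strict subset of its set of states forms an `F`-loop. -/
def IsIrreducible {n : ℕ} (Pl : Fin n → Setoid Ω) (F : Setoid Ω)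
    {m : ℕ} (x y : ZMod m → Ω) : Prop :=
  ¬ ∃ (m' : ℕ) (x' y' : ZMod m' → Ω),
      IsLoop Pl F m' x' y' ∧ loopStates x' y' ⊂ loopStates x y

/-- A loop is type-2 irreducible if no four distinct states of the loop lie in the
same block of `F`. -/
def Type2Irreducible (F : Setoid Ω) {m : ℕ} (x y : ZMod m → Ω) : Prop :=
  ¬ ∃ a b c d : Ω,
      a ∈ loopStates x y ∧ b ∈ loopStates x y ∧ c ∈ loopStates x y ∧
        d ∈ loopStates x y ∧
      a ≠ b ∧ a ≠ c ∧ a ≠ d ∧ b ≠ c ∧ b ≠ d ∧ c ≠ d ∧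
      F.r a b ∧ F.r a c ∧ F.r a d

/-- A loop is `F'`-balanced if for every partition of its set of states into two
disjoint `F'`-measurable sets `A` and `B`, the number of transitions from `A` to `B`
equals the number of transitions from `B` to `A`. -/
def Balanced (F' : Setoid Ω) {m : ℕ} (x y : ZMod m → Ω) : Prop :=
  ∀ A B : Set Ω,
    A ∪ B = loopStates x y → A ∩ B = ∅ →
    (∀ ω ω', ω ∈ loopStates x y → ω' ∈ loopStates x y → F'.r ω ω' →
      (ω ∈ A ↔ ω' ∈ A)) →
    Nat.card {j : ZMod m // x j ∈ A ∧ y j ∈ B} =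
      Nat.card {j : ZMod m // x j ∈ B ∧ y j ∈ A}

/-- A loop is `F'`-covered if its index set can be partitioned into the set
`J = {j : x j ∈ F'(y j)}` together with classes each of which, arranged in a
suitable cyclic order, forms an `F'`-loop. -/
def Covered {n : ℕ} (Pl : Fin n → Setoid Ω) (F' : Setoid Ω)
    {m : ℕ} (x y : ZMod m → Ω) : Prop :=
  ∃ (r : ℕ) (I : Fin r → Set (ZMod m)),
    (Pairwise fun t t' => Disjoint (I t) (I t')) ∧
    (⋃ t, I t) = {j | ¬ F'.r (x j) (y j)} ∧
    ∀ t, ∃ (mt : ℕ) (e : ZMod mt → ZMod m),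
      Function.Injective e ∧ Set.range e = I t ∧
      IsLoop Pl F' mt (x ∘ e) (y ∘ e)


/-- **Proposition (covered implies the product condition).**
If an `F₁`-loop is `F₂`-covered, then for every positive `F₂`-measurable function
`f` on the states of the loop, `∏ j, f (ω_j) / f (ω̄_j) = 1`. -/
theorem covered_implies_product_one
    {Ω : Type} [Fintype Ω] [Nonempty Ω] {n : ℕ} (hn : 2 ≤ n)
    (Pl : Fin n → Setoid Ω) (F₁ F₂ : Setoid Ω)
    (m : ℕ) [NeZero m] (x y : ZMod m → Ω)
    (hloop : IsLoop Pl F₁ m x y) (hcov : Covered Pl F₂ x y)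
    (f : Ω → ℝ) (hpos : ∀ ω ∈ loopStates x y, 0 < f ω)
    (hmeas : ∀ ω ∈ loopStates x y, ∀ ω' ∈ loopStates x y,
      F₂.r ω ω' → f ω = f ω') :
    ∏ j : ZMod m, f (x j) / f (y j) = 1 := by
  obtain ⟨r, I, hdisj, hunion, hloops⟩ := hcov
  have hx : ∀ j, x j ∈ loopStates x y := fun j => Or.inl ⟨j, rfl⟩
  have hy : ∀ j, y j ∈ loopStates x y := fun j => Or.inr ⟨j, rfl⟩
  have hfx : ∀ j, f (x j) ≠ 0 := fun j => (hpos _ (hx j)).ne'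
  have hfy : ∀ j, f (y j) ≠ 0 := fun j => (hpos _ (hy j)).ne'
  set T : Finset (ZMod m) := Finset.univ.filter (fun j => ¬ F₂.r (x j) (y j)) with hT
  have h1 : ∏ j : ZMod m, f (x j) / f (y j) = ∏ j ∈ T, f (x j) / f (y j) := by
    refine (Finset.prod_subset (Finset.subset_univ T) ?_).symm
    intro j _ hj
    simp only [hT, Finset.mem_filter, Finset.mem_univ, true_and, not_not] at hj
    rw [hmeas _ (hx j) _ (hy j) hj, div_self (hfy j)]
  rw [h1]
  have hT2 : T = Finset.univ.biUnion (fun t => (I t).toFinset) := by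
    apply Finset.coe_injective
    push_cast [Finset.coe_biUnion]
    simp only [Finset.coe_univ, Set.mem_univ, Set.iUnion_true, Set.coe_toFinset]
    rw [hunion]
    ext j; simp [hT]
  rw [hT2, Finset.prod_biUnion]
  · apply Finset.prod_eq_one
    intro t _
    obtain ⟨mt, e, he, hrange, hlp⟩ := hloops t
    have h2 := hlp.two_le
    haveI : NeZero mt := ⟨by omega⟩
    have himg : (I t).toFinset = Finset.univ.image e := by
      apply Finset.coe_injective; simp [← hrange]
    rw [himg, Finset.prod_image (fun a _ b _ h => he h)]
    have hstep : ∀ k : ZMod mt, f (y (e k)) = f (x (e (k+1))) := fun k =>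
      hmeas _ (hy _) _ (hx _) (hlp.link k)
    rw [Finset.prod_div_distrib]
    have heq : ∏ k : ZMod mt, f (y (e k)) = ∏ k : ZMod mt, f (x (e k)) := by
      calc ∏ k : ZMod mt, f (y (e k)) = ∏ k : ZMod mt, f (x (e (k+1))) :=
            Finset.prod_congr rfl (fun k _ => hstep k)
        _ = ∏ k : ZMod mt, f (x (e k)) :=
            Fintype.prod_equiv (Equiv.addRight 1) _ _ (fun k => rfl)
    rw [heq, div_self]
    exact Finset.prod_ne_zero_iff.mpr (fun k _ => hfx _)
  · intro t _ t' _ htt'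
    exact Set.disjoint_toFinset.mpr (hdisj htt')


end Oracles
end

section
/- If an F₁-loop (ω_1, ω̄_1, ω_2, ω̄_2, …, ω_m, ω̄_m) satisfies ∏_{j=1}^m f(ω_j)/f(ω̄_j) = 1 for every function f from the set of states of the loop to (0, ∞) that is F₂-measurable (f(ω) = f(ω') whenever ω, ω' are states of the loop with F₂(ω) = F₂(ω')), then the loop is F₂-balanced. -/
open scoped Classical

namespace Oracles

variable {Ω : Type}

private lemma prod_zpow_sum {α : Type*} (s : Finset α) (g : α → ℤ) :
    ∏ j ∈ s, (2:ℝ) ^ (g j) = (2:ℝ) ^ (∑ j ∈ s, g j) := by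
  induction s using Finset.cons_induction with
  | empty => simp
  | cons a s ha ih => rw [Finset.prod_cons, Finset.sum_cons, ih, zpow_add₀ (by norm_num)]

/-- **Proposition (the product condition implies balancedness).**
If an `F₁`-loop satisfies `∏ j, f (ω_j) / f (ω̄_j) = 1` for every positive
`F₂`-measurable function `f` on the states of the loop, then it is `F₂`-balanced. -/
theorem product_one_implies_balanced
    {Ω : Type} [Fintype Ω] [Nonempty Ω] {n : ℕ} (hn : 2 ≤ n)
    (Pl : Fin n → Setoid Ω) (F₁ F₂ : Setoid Ω)
    (m : ℕ) [NeZero m] (x y : ZMod m → Ω)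
    (hloop : IsLoop Pl F₁ m x y)
    (hprod : ∀ f : Ω → ℝ, (∀ ω ∈ loopStates x y, 0 < f ω) →
      (∀ ω ∈ loopStates x y, ∀ ω' ∈ loopStates x y, F₂.r ω ω' → f ω = f ω') →
      ∏ j : ZMod m, f (x j) / f (y j) = 1) :
    Balanced F₂ x y := by
  intro A B hAB hdis hmeas
  have hx : ∀ j, x j ∈ loopStates x y := fun j => Or.inl ⟨j, rfl⟩
  have hy : ∀ j, y j ∈ loopStates x y := fun j => Or.inr ⟨j, rfl⟩
  have hB : ∀ ω ∈ loopStates x y, (ω ∈ B ↔ ω ∉ A) := by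
    intro ω hω
    constructor
    · intro hωB hωA
      have : ω ∈ A ∩ B := ⟨hωA, hωB⟩
      simp [hdis] at this
    · intro hωA
      have : ω ∈ A ∪ B := hAB ▸ hω
      rcases this with h | h
      · exact absurd h hωA
      · exact h
  set f : Ω → ℝ := fun ω => if ω ∈ A then 2 else 1 with hf
  have hfpos : ∀ ω ∈ loopStates x y, 0 < f ω := by
    intro ω _; by_cases h : ω ∈ A <;> simp [hf, h]
  have hfmeas : ∀ ω ∈ loopStates x y, ∀ ω' ∈ loopStates x y, F₂.r ω ω' → f ω = f ω' := by
    intro ω hω ω' hω' hr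
    have := hmeas ω ω' hω hω' hr
    by_cases h : ω ∈ A
    · simp only [hf]; rw [if_pos h, if_pos (this.mp h)]
    · simp only [hf]; rw [if_neg h, if_neg (fun h' => h (this.mpr h'))]
  have hP := hprod f hfpos hfmeas
  set g : ZMod m → ℤ := fun j =>
    (if x j ∈ A ∧ y j ∈ B then 1 else 0) - (if x j ∈ B ∧ y j ∈ A then 1 else 0) with hg
  have hterm : ∀ j, f (x j) / f (y j) = (2:ℝ) ^ (g j) := by
    intro j
    have hxB := hB (x j) (hx j)
    have hyB := hB (y j) (hy j)
    by_cases hA1 : x j ∈ A <;> by_cases hA2 : y j ∈ A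
    · have h1 : x j ∉ B := fun h => hxB.mp h hA1
      have h2 : y j ∉ B := fun h => hyB.mp h hA2
      simp [hf, hg, hA1, hA2, h1, h2] <;> norm_num
    · have h1 : x j ∉ B := fun h => hxB.mp h hA1
      have h2 : y j ∈ B := hyB.mpr hA2
      simp [hf, hg, hA1, hA2, h1, h2] <;> norm_num
    · have h1 : x j ∈ B := hxB.mpr hA1
      have h2 : y j ∉ B := fun h => hyB.mp h hA2
      simp [hf, hg, hA1, hA2, h1, h2] <;> norm_num
    · have h1 : x j ∈ B := hxB.mpr hA1
      have h2 : y j ∈ B := hyB.mpr hA2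
      simp [hf, hg, hA1, hA2, h1, h2] <;> norm_num
  rw [Finset.prod_congr rfl (fun j _ => hterm j), prod_zpow_sum] at hP
  have hsum : ∑ j, g j = 0 := by
    have h0 : (2:ℝ) ^ (∑ j, g j) = (2:ℝ) ^ (0:ℤ) := by simpa using hP
    exact zpow_right_injective₀ (a := (2:ℝ)) (by norm_num) (by norm_num) h0
  rw [hg, Finset.sum_sub_distrib] at hsum
  simp only [Finset.sum_boole] at hsum
  have hcard :
      (Finset.univ.filter fun j => x j ∈ A ∧ y j ∈ B).card =
        (Finset.univ.filter fun j => x j ∈ B ∧ y j ∈ A).card := by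
    have := sub_eq_zero.mp hsum
    exact_mod_cast this
  rw [Nat.card_eq_fintype_card, Nat.card_eq_fintype_card,
    Fintype.card_subtype, Fintype.card_subtype]
  exact hcard

end Oracles
end

section
/- If an F-loop intersects the same CKC more than once, i.e., there are distinct indices j ≠ j' such that the pairs (ω_j, ω̄_j) and (ω_{j'}, ω̄_{j'}) lie in the same CKC, then the loop is not irreducible. -/
open scoped Classical

namespace Oracles

variable {Ω : Type}

/-- **Proposition (loops meeting a CKC twice are reducible).**
If an `F`-loop intersects the same CKC more than once, i.e. there are distinct
indices `j ≠ j'` such that the pairs `(ω_j, ω̄_j)` and `(ω_{j'}, ω̄_{j'})` lie in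
the same CKC, then the loop is not irreducible. -/
theorem not_irreducible_of_ckc_twice
    {Ω : Type} [Fintype Ω] [Nonempty Ω] {n : ℕ} (hn : 2 ≤ n)
    (Pl : Fin n → Setoid Ω) (F : Setoid Ω)
    (m : ℕ) (x y : ZMod m → Ω) (hloop : IsLoop Pl F m x y)
    (j j' : ZMod m) (hne : j ≠ j') (hsame : ckcRel Pl (x j) (x j')) :
    ¬ IsIrreducible Pl F x y := by
  intro hirr
  haveI : NeZero m := ⟨by have := hloop.two_le; omega⟩
  haveI : Fact (1 < m) := ⟨by have := hloop.two_le; omega⟩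
  have hsymm : ∀ a b : Ω, ckcRel Pl a b → ckcRel Pl b a :=
    fun a b h => (⨆ i, Pl i).iseqv.symm h
  have htrans : ∀ a b c : Ω, ckcRel Pl a b → ckcRel Pl b c → ckcRel Pl a c :=
    fun a b c h h' => (⨆ i, Pl i).iseqv.trans h h'
  have hdisj' : ∀ k k' : ZMod m, k ≠ k' → ∀ a : Ω,
      a ∈ ({y k, x (k + 1)} : Set Ω) → a ∈ ({y k', x (k' + 1)} : Set Ω) → False := by
    intro k k' hkk a h1 h2
    have := hloop.link_disjoint k k' hkk
    exact Set.eq_empty_iff_forall_notMem.mp this a ⟨h1, h2⟩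
  set d := (j' - j).val with hd
  have hdpos : 0 < d := ZMod.val_pos.mpr (sub_ne_zero.mpr hne.symm)
  have hdm : d < m := ZMod.val_lt _
  have hcast : ((d : ℕ) : ZMod m) = j' - j := ZMod.natCast_rightInverse _
  have hd1 : d ≠ 1 := by
    intro h1
    have hj' : j' = j + 1 := by
      have h2 : ((d : ℕ) : ZMod m) = j' - j := hcast
      rw [h1] at h2
      push_cast at h2
      linear_combination -h2
    exact hloop.ckc_ne j (hj' ▸ hsame)
  have hd2 : 2 ≤ d := by omega
  haveI : NeZero d := ⟨by omega⟩
  haveI : Fact (1 < d) := ⟨hd2⟩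
  set f : ZMod d → ZMod m := fun i => j + ((i.val : ℕ) : ZMod m) with hf
  set x' : ZMod d → Ω := fun i => if i = 0 then x j' else x (f i) with hx'def
  set y' : ZMod d → Ω := fun i => y (f i) with hy'def
  have hf0 : f 0 = j := by simp [hf]
  have hfinj : Function.Injective f := by
    intro a b hab
    have h1 : ((a.val : ℕ) : ZMod m) = ((b.val : ℕ) : ZMod m) := by
      have : j + ((a.val : ℕ) : ZMod m) = j + ((b.val : ℕ) : ZMod m) := hab
      exact add_left_cancel this
    have h2 := congrArg ZMod.val h1
    rw [ZMod.val_cast_of_lt (lt_trans a.val_lt hdm),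
      ZMod.val_cast_of_lt (lt_trans b.val_lt hdm)] at h2
    have := ZMod.natCast_rightInverse (n := d)
    calc a = ((a.val : ℕ) : ZMod d) := (this a).symm
    _ = ((b.val : ℕ) : ZMod d) := by rw [h2]
    _ = b := this b
  have hvadd : ∀ i : ZMod d, (i + 1).val = (i.val + 1) % d := by
    intro i
    rw [ZMod.val_add, ZMod.val_one]
  have hsucc : ∀ i : ZMod d, i + 1 ≠ 0 → f (i + 1) = f i + 1 := by
    intro i hi
    have hv : (i + 1).val = i.val + 1 := by
      rcases Nat.lt_or_ge (i.val + 1) d with h | h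
      · rw [hvadd, Nat.mod_eq_of_lt h]
      · exfalso
        have : i.val + 1 = d := by have := i.val_lt; omega
        apply hi
        apply (ZMod.val_eq_zero _).mp
        rw [hvadd, this, Nat.mod_self]
    simp only [hf, hv]
    push_cast
    ring
  have hlast : ∀ i : ZMod d, i + 1 = 0 → f i + 1 = j' := by
    intro i hi
    have hv : i.val + 1 = d := by
      have h1 := hvadd i
      rw [hi, ZMod.val_zero] at h1
      have hlt := i.val_lt
      rcases Nat.lt_or_ge (i.val + 1) d with h | h
      · rw [Nat.mod_eq_of_lt h] at h1; omega
      · omega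
    have h2 : f i + 1 = j + ((i.val + 1 : ℕ) : ZMod m) := by
      simp only [hf]; push_cast; ring
    rw [h2, hv, hcast]; ring
  have hx' : ∀ i : ZMod d, x' (i + 1) = x (f i + 1) := by
    intro i
    by_cases hi : i + 1 = 0
    · rw [hi, hlast i hi]; simp [hx'def]
    · simp only [hx'def, if_neg hi, hsucc i hi]
  have hset : ∀ i : ZMod d, ({y' i, x' (i + 1)} : Set Ω) = {y (f i), x (f i + 1)} := by
    intro i; rw [hx' i]
  have hjj1 : j ≠ j' - 1 := by
    intro h
    apply hd1
    have h2 : j' - j = 1 := by rw [h]; ring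
    rw [hd, h2, ZMod.val_one]
  have hfne : ∀ i : ZMod d, i ≠ 0 → f i ≠ j := by
    intro i hi h
    have h1 : ((i.val : ℕ) : ZMod m) = 0 := by
      have : j + ((i.val : ℕ) : ZMod m) = j + 0 := by rw [add_zero]; exact h
      exact add_left_cancel this
    have h2 := (ZMod.natCast_eq_zero_iff _ _).mp h1
    have h3 : 0 < i.val := ZMod.val_pos.mpr hi
    have h4 : i.val < m := lt_trans i.val_lt hdm
    exact absurd (Nat.le_of_dvd h3 h2) (by omega)
  have hfne1 : ∀ i : ZMod d, f i ≠ j - 1 := by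
    intro i h
    have h1 : ((i.val + 1 : ℕ) : ZMod m) = 0 := by
      push_cast
      have : j + ((i.val : ℕ) : ZMod m) = j - 1 := h
      linear_combination this
    have h2 := (ZMod.natCast_eq_zero_iff _ _).mp h1
    have h4 : i.val < d := i.val_lt
    exact absurd (Nat.le_of_dvd (by omega) h2) (by omega)
  have hloop' : IsLoop Pl F d x' y' := by
    constructor
    · exact hd2
    · -- pair_ne
      intro i
      by_cases hi : i = 0
      · subst hi
        simp only [hx'def, hy'def, if_pos rfl, hf0]
        intro h
        refine hdisj' j (j' - 1) hjj1 (y j) (Or.inl rfl) ?_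
        rw [sub_add_cancel]
        exact Or.inr h.symm
      · simp only [hx'def, hy'def, if_neg hi]
        exact hloop.pair_ne (f i)
    · -- pair_ckc
      intro i
      by_cases hi : i = 0
      · subst hi
        simp only [hx'def, hy'def, if_pos rfl, hf0]
        exact htrans _ _ _ (hsymm _ _ hsame) (hloop.pair_ckc j)
      · simp only [hx'def, hy'def, if_neg hi]
        exact hloop.pair_ckc (f i)
    · -- link
      intro i
      rw [hx' i]
      exact hloop.link (f i)
    · -- ckc_ne
      intro i
      rw [hx' i]
      by_cases hi : i = 0
      · subst hi
        simp only [hx'def, if_pos rfl, hf0]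
        intro h
        exact hloop.ckc_ne j (htrans _ _ _ hsame h)
      · simp only [hx'def, if_neg hi]
        exact hloop.ckc_ne (f i)
    · -- link_disjoint
      intro a b hab
      rw [hset a, hset b]
      exact hloop.link_disjoint (f a) (f b) (fun h => hab (hfinj h))
  have hxj : x j ∉ loopStates x' y' := by
    rintro (⟨i, hix⟩ | ⟨i, hiy⟩)
    · by_cases hi : i = 0
      · subst hi
        simp only [hx'def, if_pos rfl] at hix
        refine hdisj' (j' - 1) (j - 1) (fun h => hne (sub_left_inj.mp h).symm) (x j) ?_ ?_
        · rw [sub_add_cancel]; exact Or.inr hix.symm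
        · rw [sub_add_cancel]; exact Or.inr rfl
      · simp only [hx'def, if_neg hi] at hix
        refine hdisj' (f i - 1) (j - 1) (fun h => hfne i hi (by
          have : f i - 1 + 1 = j - 1 + 1 := by rw [h]
          rwa [sub_add_cancel, sub_add_cancel] at this)) (x j) ?_ ?_
        · rw [sub_add_cancel]; exact Or.inr hix.symm
        · rw [sub_add_cancel]; exact Or.inr rfl
    · simp only [hy'def] at hiy
      refine hdisj' (f i) (j - 1) (hfne1 i) (x j) (Or.inl hiy.symm) ?_
      rw [sub_add_cancel]
      exact Or.inr rfl
  have hsub : loopStates x' y' ⊆ loopStates x y := by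
    rintro ω (⟨i, rfl⟩ | ⟨i, rfl⟩)
    · by_cases hi : i = 0
      · subst hi
        simp only [hx'def, if_pos rfl]
        exact Or.inl ⟨j', rfl⟩
      · simp only [hx'def, if_neg hi]
        exact Or.inl ⟨f i, rfl⟩
    · exact Or.inr ⟨f i, rfl⟩
  exact hirr ⟨d, x', y', hloop', hsub, fun hsup => hxj (hsup (Or.inl ⟨j, rfl⟩))⟩

end Oracles
end

section
/- If an F-loop is irreducible and consists of at least 6 states (m ≥ 3 pairs), then it is F-fully-informative. -/
open scoped Classical

namespace Oracles

variable {Ω : Type}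

lemma ckc_symm {n : ℕ} {Pl : Fin n → Setoid Ω} {a b : Ω} (h : ckcRel Pl a b) :
    ckcRel Pl b a := (⨆ i, Pl i).symm' h

lemma ckc_trans {n : ℕ} {Pl : Fin n → Setoid Ω} {a b c : Ω} (h : ckcRel Pl a b)
    (h' : ckcRel Pl b c) : ckcRel Pl a c := (⨆ i, Pl i).trans' h h'

lemma two_set_disjoint {α : Type*} {p q r s : α} (h1 : p ≠ r) (h2 : p ≠ s)
    (h3 : q ≠ r) (h4 : q ≠ s) : ({p, q} : Set α) ∩ {r, s} = ∅ := by
  apply Set.eq_empty_iff_forall_notMem.mpr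
  rintro z ⟨hz1, hz2⟩
  simp only [Set.mem_insert_iff, Set.mem_singleton_iff] at hz1 hz2
  rcases hz1 with rfl | rfl <;> rcases hz2 with rfl | rfl <;> tauto

section LoopFacts

variable {n : ℕ} {Pl : Fin n → Setoid Ω} {F : Setoid Ω} {m : ℕ} {x y : ZMod m → Ω}

lemma loop_y_ne_x (hL : IsLoop Pl F m x y) (j k : ZMod m) : y j ≠ x k := by
  have : NeZero m := ⟨by have := hL.two_le; omega⟩
  have : Fact (1 < m) := ⟨by have := hL.two_le; omega⟩
  intro h
  by_cases hk : k = j + 1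
  · subst hk
    exact hL.ckc_ne j (h ▸ hL.pair_ckc j)
  · have hjk : j ≠ k - 1 := by
      intro hh; apply hk; rw [hh]; ring
    have hd := hL.link_disjoint j (k - 1) hjk
    have : y j ∈ ({y j, x (j + 1)} : Set Ω) ∩ {y (k - 1), x (k - 1 + 1)} := by
      constructor
      · exact Set.mem_insert _ _
      · right; simp only [Set.mem_singleton_iff]; rw [sub_add_cancel]; exact h
    rw [hd] at this
    exact this

lemma loop_x_inj (hL : IsLoop Pl F m x y) : Function.Injective x := by
  intro j k h
  by_contra hne
  have hjk : j - 1 ≠ k - 1 := fun hh => hne (by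
    have := congrArg (· + 1) hh; simpa [sub_add_cancel] using this)
  have hd := hL.link_disjoint (j - 1) (k - 1) hjk
  have : x j ∈ ({y (j - 1), x (j - 1 + 1)} : Set Ω) ∩ {y (k - 1), x (k - 1 + 1)} := by
    constructor
    · right; simp only [Set.mem_singleton_iff]; rw [sub_add_cancel]
    · right; simp only [Set.mem_singleton_iff]; rw [sub_add_cancel]; exact h
  rw [hd] at this
  exact this

lemma loop_y_inj (hL : IsLoop Pl F m x y) : Function.Injective y := by
  intro j k h
  by_contra hne
  have hd := hL.link_disjoint j k hne
  have : y j ∈ ({y j, x (j + 1)} : Set Ω) ∩ {y k, x (k + 1)} := by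
    exact ⟨Set.mem_insert _ _, by left; exact h⟩
  rw [hd] at this
  exact this

lemma loop_rotate (hL : IsLoop Pl F m x y) (c : ZMod m) :
    IsLoop Pl F m (fun k => x (k + c)) (fun k => y (k + c)) := by
  refine ⟨hL.two_le, fun j => hL.pair_ne _, fun j => hL.pair_ckc _, ?_, ?_, ?_⟩
  · intro j
    have : j + 1 + c = j + c + 1 := by ring
    simp only [this]
    exact hL.link _
  · intro j
    have : j + 1 + c = j + c + 1 := by ring
    simp only [this]
    exact hL.ckc_ne _
  · intro j k hjk
    have h1 : j + 1 + c = j + c + 1 := by ring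
    have h2 : k + 1 + c = k + c + 1 := by ring
    simp only [h1, h2]
    exact hL.link_disjoint _ _ (fun hh => hjk (by
      have := congrArg (· - c) hh; simpa [add_sub_cancel_right] using this))

lemma range_rotate (c : ZMod m) : Set.range (fun k => x (k + c)) = Set.range x :=
  Function.Surjective.range_comp (fun a => ⟨a - c, by simp⟩) x

end LoopFacts


/-- **Proposition (irreducible loops with at least 6 states are fully informative).**
If an `F`-loop is irreducible and consists of at least 6 states (at least 3 pairs),
then it is `F`-fully-informative. -/
theorem irreducible_fully_informative
    {Ω : Type} [Fintype Ω] [Nonempty Ω] {n : ℕ} (hn : 2 ≤ n)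
    (Pl : Fin n → Setoid Ω) (F : Setoid Ω)
    (m : ℕ) (x y : ZMod m → Ω) (hloop : IsLoop Pl F m x y)
    (hirr : IsIrreducible Pl F x y) (hm : 3 ≤ m) :
    FullyInformative F x y := by

  intro j0 hF0
  have hmz : NeZero m := ⟨by omega⟩
  have hmf : Fact (1 < m) := ⟨by omega⟩
  set X : ZMod m → Ω := fun k => x (k + j0) with hXdef
  set Y : ZMod m → Ω := fun k => y (k + j0) with hYdef
  have hLX : IsLoop Pl F m X Y := loop_rotate hloop j0
  have hstates : loopStates X Y = loopStates x y := by
    unfold loopStates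
    rw [hXdef, hYdef, range_rotate, range_rotate]
  have hF0' : F.r (X 0) (Y 0) := by
    simp only [hXdef, hYdef, zero_add]; exact hF0
  have hyx : ∀ j k : ZMod m, Y j ≠ X k := loop_y_ne_x hLX
  have hxinj : Function.Injective X := loop_x_inj hLX
  have hyinj : Function.Injective Y := loop_y_inj hLX
  by_cases hC : ckcRel Pl (X (-1)) (X 1)
  · -- Case B : merge
    rcases Nat.lt_or_ge m 4 with h4 | h4
    · -- m = 3
      have hm3 : m = 3 := by omega
      subst hm3
      have hC' : ckcRel Pl (X (1 + 1)) (X 1) := by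
        rw [show ((1 : ZMod 3) + 1) = -1 by decide]; exact hC
      exact hLX.ckc_ne 1 (ckc_symm hC')
    · have hM : NeZero (m - 2) := ⟨by omega⟩
      have hMf : Fact (1 < m - 2) := ⟨by omega⟩
      set e : ZMod (m - 2) → ZMod m := fun k => ((k.val + 1 : ℕ) : ZMod m) with he
      have hev : ∀ k : ZMod (m - 2), (e k).val = k.val + 1 := fun k =>
        ZMod.val_cast_of_lt (by have := ZMod.val_lt k; omega)
      have heinj : Function.Injective e := by
        intro a b h
        apply ZMod.val_injective
        have := congrArg ZMod.val h
        rw [hev, hev] at this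
        omega
      have hsucc : ∀ k : ZMod (m - 2), (k + 1).val = (k.val + 1) % (m - 2) := fun k => by
        rw [ZMod.val_add, ZMod.val_one]
      have hneg1 : ((m - 1 : ℕ) : ZMod m) = -1 := by
        rw [Nat.cast_sub (by omega : 1 ≤ m), ZMod.natCast_self, Nat.cast_one, zero_sub]
      have hneg2 : ((m - 2 : ℕ) : ZMod m) = -2 := by
        rw [Nat.cast_sub (by omega : 2 ≤ m), ZMod.natCast_self, Nat.cast_ofNat, zero_sub]
      set f : ZMod (m - 2) → ZMod m := fun k => if k = 0 then (-1 : ZMod m) else e k with hf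
      have hfinj : Function.Injective f := by
        intro a b h
        by_cases ha : a = 0 <;> by_cases hb : b = 0 <;>
          simp only [hf, ha, hb, if_true, if_false, if_pos, if_neg, ite_true, ite_false] at h
        · rw [ha, hb]
        · exfalso
          rw [← hneg1] at h
          have := congrArg ZMod.val h
          rw [hev, ZMod.val_cast_of_lt (by omega)] at this
          have := ZMod.val_lt b
          omega
        · exfalso
          rw [← hneg1] at h
          have := congrArg ZMod.val h
          rw [hev, ZMod.val_cast_of_lt (by omega)] at this
          have := ZMod.val_lt a
          omega
        · exact heinj h
      -- wrap facts
      have hwrap : ∀ k : ZMod (m - 2), k + 1 = 0 → e k = -2 := by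
        intro k hk
        have h0 : (k + 1).val = 0 := by rw [hk, ZMod.val_zero]
        rw [hsucc] at h0
        have hv := ZMod.val_lt k
        have : k.val + 1 = m - 2 := by
          rcases Nat.lt_or_ge (k.val + 1) (m - 2) with h | h
          · rw [Nat.mod_eq_of_lt h] at h0; omega
          · omega
        rw [he]
        simp only
        rw [this, hneg2]
      have hnwrap : ∀ k : ZMod (m - 2), k + 1 ≠ 0 → e (k + 1) = e k + 1 := by
        intro k hk
        have h0 : (k + 1).val ≠ 0 := fun hh => hk ((ZMod.val_eq_zero _).mp hh)
        rw [hsucc] at h0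
        have hv := ZMod.val_lt k
        have hlt : k.val + 1 < m - 2 := by
          rcases Nat.lt_or_ge (k.val + 1) (m - 2) with h | h
          · exact h
          · exfalso; apply h0; have : k.val + 1 = m - 2 := by omega
            rw [this, Nat.mod_self]
        rw [he]
        simp only
        rw [hsucc, Nat.mod_eq_of_lt hlt]
        push_cast
        ring
      have he0 : e 0 = 1 := by rw [he]; simp [ZMod.val_zero]
      have he1 : e 1 = 1 + 1 := by
        rw [he]; simp only [ZMod.val_one]; push_cast; ring
      set X'' : ZMod (m - 2) → Ω := fun k => X (f k) with hX''
      set Y'' : ZMod (m - 2) → Ω := fun k => Y (e k) with hY''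
      have hone : (1 : ZMod (m - 2)) ≠ 0 := one_ne_zero
      have hLnew : IsLoop Pl F (m - 2) X'' Y'' := by
        refine ⟨by omega, ?_, ?_, ?_, ?_, ?_⟩
        · intro k
          by_cases hk : k = 0
          · subst hk
            simp only [hX'', hY'', hf]
            rw [if_true]
            exact fun h => hyx (e 0) (-1) h.symm
          · simp only [hX'', hY'', hf]
            rw [if_neg hk]
            exact hLX.pair_ne (e k)
        · intro k
          by_cases hk : k = 0
          · subst hk
            simp only [hX'', hY'', hf]
            rw [if_true, he0]
            exact ckc_trans hC (hLX.pair_ckc 1)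
          · simp only [hX'', hY'', hf]
            rw [if_neg hk]
            exact hLX.pair_ckc (e k)
        · intro k
          by_cases hk : k + 1 = 0
          · have hek : e k = -2 := hwrap k hk
            simp only [hX'', hY'', hf]
            rw [if_pos hk, hek]
            have := hLX.link (-2)
            rw [show (-2 : ZMod m) + 1 = -1 by ring] at this
            exact this
          · simp only [hX'', hY'', hf]
            rw [if_neg hk, hnwrap k hk]
            exact hLX.link (e k)
        · intro k
          by_cases hk : k = 0
          · subst hk
            simp only [hX'', hf, zero_add]
            rw [if_true, if_neg hone, he1]
            intro h
            exact hLX.ckc_ne 1 (ckc_trans (ckc_symm hC) h)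
          · by_cases hk1 : k + 1 = 0
            · have hek : e k = -2 := hwrap k hk1
              simp only [hX'', hf]
              rw [if_neg hk, if_pos hk1, hek]
              have := hLX.ckc_ne (-2)
              rw [show (-2 : ZMod m) + 1 = -1 by ring] at this
              exact this
            · simp only [hX'', hf]
              rw [if_neg hk, if_neg hk1, hnwrap k hk1]
              exact hLX.ckc_ne (e k)
        · intro j k hjk
          simp only [hX'', hY'']
          exact two_set_disjoint
            (fun h => hjk (heinj (hyinj h)))
            (hyx _ _)
            (fun h => (hyx _ _) h.symm)
            (fun h => hjk (by
              have := hfinj (hxinj h)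
              exact add_right_cancel this))
      apply hirr
      refine ⟨m - 2, X'', Y'', hLnew, ?_⟩
      rw [← hstates]
      constructor
      · rintro z (⟨k, rfl⟩ | ⟨k, rfl⟩)
        · exact Or.inl ⟨f k, rfl⟩
        · exact Or.inr ⟨e k, rfl⟩
      · intro hcon
        have : Y 0 ∈ loopStates X'' Y'' := hcon (Or.inr ⟨0, rfl⟩)
        rcases this with ⟨k, hk⟩ | ⟨k, hk⟩
        · exact hyx 0 (f k) hk.symm
        · have := hyinj hk
          have := congrArg ZMod.val this
          rw [hev, ZMod.val_zero] at this
          omega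
  · -- Case A : drop pair 0
    have hM : NeZero (m - 1) := ⟨by omega⟩
    have hMf : Fact (1 < m - 1) := ⟨by omega⟩
    set e : ZMod (m - 1) → ZMod m := fun k => ((k.val + 1 : ℕ) : ZMod m) with he
    have hev : ∀ k : ZMod (m - 1), (e k).val = k.val + 1 := fun k =>
      ZMod.val_cast_of_lt (by have := ZMod.val_lt k; omega)
    have heinj : Function.Injective e := by
      intro a b h
      apply ZMod.val_injective
      have := congrArg ZMod.val h
      rw [hev, hev] at this
      omega
    have hsucc : ∀ k : ZMod (m - 1), (k + 1).val = (k.val + 1) % (m - 1) := fun k => by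
      rw [ZMod.val_add, ZMod.val_one]
    have hneg1 : ((m - 1 : ℕ) : ZMod m) = -1 := by
      rw [Nat.cast_sub (by omega : 1 ≤ m), ZMod.natCast_self, Nat.cast_one, zero_sub]
    have hkey : ∀ k : ZMod (m - 1),
        (e (k + 1) = e k + 1) ∨ (e (k + 1) = 1 ∧ e k = -1) := by
      intro k
      have hv := ZMod.val_lt k
      by_cases h : k.val + 1 < m - 1
      · left
        rw [he]
        simp only
        rw [hsucc, Nat.mod_eq_of_lt h]
        push_cast
        ring
      · right
        have h1 : k.val + 1 = m - 1 := by omega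
        have h2 : (k + 1).val = 0 := by rw [hsucc, h1, Nat.mod_self]
        constructor
        · rw [he]; simp only [h2]; norm_num
        · rw [he]; simp only [h1]; exact hneg1
    set X' : ZMod (m - 1) → Ω := fun k => X (e k) with hX'
    set Y' : ZMod (m - 1) → Ω := fun k => Y (e k) with hY'
    have hLnew : IsLoop Pl F (m - 1) X' Y' := by
      refine ⟨by omega, ?_, ?_, ?_, ?_, ?_⟩
      · exact fun k => hLX.pair_ne (e k)
      · exact fun k => hLX.pair_ckc (e k)
      · intro k
        rcases hkey k with h | ⟨h1, h2⟩
        · simp only [hX', hY', h]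
          exact hLX.link (e k)
        · simp only [hX', hY', h1, h2]
          have l1 : F.r (Y (-1)) (X 0) := by
            have := hLX.link (-1)
            rw [show (-1 : ZMod m) + 1 = 0 by ring] at this
            exact this
          have l2 : F.r (Y 0) (X 1) := by
            have := hLX.link 0
            rw [zero_add] at this
            exact this
          exact F.trans' (F.trans' l1 hF0') l2
      · intro k
        rcases hkey k with h | ⟨h1, h2⟩
        · simp only [hX', h]
          exact hLX.ckc_ne (e k)
        · simp only [hX', h1, h2]
          exact hC
      · intro j k hjk
        simp only [hX', hY']
        exact two_set_disjoint
          (fun h => hjk (heinj (hyinj h)))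
          (hyx _ _)
          (fun h => (hyx _ _) h.symm)
          (fun h => hjk (add_right_cancel (heinj (hxinj h))))
    apply hirr
    refine ⟨m - 1, X', Y', hLnew, ?_⟩
    rw [← hstates]
    constructor
    · rintro z (⟨k, rfl⟩ | ⟨k, rfl⟩)
      · exact Or.inl ⟨e k, rfl⟩
      · exact Or.inr ⟨e k, rfl⟩
    · intro hcon
      have : Y 0 ∈ loopStates X' Y' := hcon (Or.inr ⟨0, rfl⟩)
      rcases this with ⟨k, hk⟩ | ⟨k, hk⟩
      · exact hyx 0 (e k) hk.symm
      · have := hyinj hk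
        have := congrArg ZMod.val this
        rw [hev, ZMod.val_zero] at this
        omega

end Oracles
end

section
/- If an F-loop is not irreducible, then either it intersects the same CKC more than once (two pairs with distinct indices lie in the same CKC), or at least four distinct states of the loop lie in the same block of F. -/
open scoped Classical

namespace Oracles

variable {Ω : Type}

/-- **Proposition (sources of reducibility).**
If an `F`-loop is not irreducible, then either it intersects the same CKC more
than once (two pairs with distinct indices lie in the same CKC), or at least four
distinct states of the loop lie in the same block of `F` (that is, the loop is
not type-2 irreducible). -/
theorem not_irreducible_cases
    {Ω : Type} [Fintype Ω] [Nonempty Ω] {n : ℕ} (hn : 2 ≤ n)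
    (Pl : Fin n → Setoid Ω) (F : Setoid Ω)
    (m : ℕ) (x y : ZMod m → Ω) (hloop : IsLoop Pl F m x y)
    (hnotirr : ¬ IsIrreducible Pl F x y) :
    (∃ j j' : ZMod m, j ≠ j' ∧ ckcRel Pl (x j) (x j')) ∨
      ¬ Type2Irreducible F x y := by
  classical
  rcases Classical.em (∃ j j' : ZMod m, j ≠ j' ∧ ckcRel Pl (x j) (x j')) with h | hL
  · exact Or.inl h
  right
  intro hT
  obtain ⟨m', x', y', hl', hss⟩ := not_not.mp hnotirr
  rw [Set.ssubset_def] at hss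
  obtain ⟨hsub, hnsub⟩ := hss
  have hm2 := hloop.two_le
  haveI : NeZero m := ⟨by omega⟩
  have crefl : ∀ a : Ω, ckcRel Pl a a := fun a => (⨆ i, Pl i).iseqv.refl a
  have csymm : ∀ {a b : Ω}, ckcRel Pl a b → ckcRel Pl b a :=
    fun h => (⨆ i, Pl i).iseqv.symm h
  have ctrans : ∀ {a b c : Ω}, ckcRel Pl a b → ckcRel Pl b c → ckcRel Pl a c :=
    fun h1 h2 => (⨆ i, Pl i).iseqv.trans h1 h2
  have hL' : ∀ j j' : ZMod m, ckcRel Pl (x j) (x j') → j = j' := by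
    intro j j' hc
    by_contra hne
    exact hL ⟨j, j', hne, hc⟩
  have hckc : ∀ (s : Ω) (j : ZMod m), s = x j ∨ s = y j → ckcRel Pl (x j) s := by
    intro s j hj
    rcases hj with rfl | rfl
    · exact crefl _
    · exact hloop.pair_ckc j
  have hPairUniq : ∀ (s t : Ω) (j k : ZMod m), (s = x j ∨ s = y j) →
      (t = x k ∨ t = y k) → ckcRel Pl s t → j = k := by
    intro s t j k hs ht hst
    exact hL' j k (ctrans (ctrans (hckc s j hs) hst) (csymm (hckc t k ht)))
  have hxinj : ∀ j k : ZMod m, x j = x k → j = k := by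
    intro j k h
    exact hL' j k (by rw [h]; exact crefl _)
  have hyinj : ∀ j k : ZMod m, y j = y k → j = k := by
    intro j k h
    exact hPairUniq (y j) (y k) j k (Or.inr rfl) (Or.inr rfl) (by rw [h]; exact crefl _)
  have hxy : ∀ j k : ZMod m, x j ≠ y k := by
    intro j k h
    have hjk : j = k :=
      hPairUniq (x j) (y k) j k (Or.inl rfl) (Or.inr rfl) (by rw [h]; exact crefl _)
    cases hjk
    exact hloop.pair_ne j h
  have hmemx : ∀ j : ZMod m, x j ∈ loopStates x y := fun j => Or.inl ⟨j, rfl⟩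
  have hmemy : ∀ j : ZMod m, y j ∈ loopStates x y := fun j => Or.inr ⟨j, rfl⟩
  have hmem : ∀ s ∈ loopStates x y, ∃ j : ZMod m, s = x j ∨ s = y j := by
    intro s hs
    simp only [loopStates, Set.mem_union, Set.mem_range] at hs
    obtain ⟨j, rfl⟩ | ⟨j, rfl⟩ := hs
    · exact ⟨j, Or.inl rfl⟩
    · exact ⟨j, Or.inr rfl⟩
  -- canonical F-partner of each loop state
  have hpartner : ∀ (s : Ω) (j : ZMod m), s = x j ∨ s = y j →
      ∃ (ps : Ω) (js : ZMod m), F.r s ps ∧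
        ((s = y js ∧ ps = x (js + 1)) ∨ (s = x (js + 1) ∧ ps = y js)) := by
    intro s j hj
    rcases hj with rfl | rfl
    · refine ⟨y (j - 1), j - 1, ?_, Or.inr ⟨(congrArg x (by ring : j - 1 + 1 = j)).symm, rfl⟩⟩
      have hl := hloop.link (j - 1)
      have he : j - 1 + 1 = j := by ring
      rw [he] at hl
      exact F.iseqv.symm hl
    · exact ⟨x (j + 1), j, hloop.link j, Or.inl ⟨rfl, rfl⟩⟩
  -- any F-relation between two distinct loop states is a link pair
  have keyLink : ∀ a b : Ω, a ∈ loopStates x y → b ∈ loopStates x y → a ≠ b → F.r a b →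
      ∃ j : ZMod m, (a = y j ∧ b = x (j + 1)) ∨ (a = x (j + 1) ∧ b = y j) := by
    intro a b ha hb hab hF
    obtain ⟨ja, hja⟩ := hmem a ha
    obtain ⟨jb, hjb⟩ := hmem b hb
    obtain ⟨pa, ka, hFa, hsha⟩ := hpartner a ja hja
    obtain ⟨pb, kb, hFb, hshb⟩ := hpartner b jb hjb
    by_cases hbpa : b = pa
    · subst hbpa
      rcases hsha with ⟨h1, h2⟩ | ⟨h1, h2⟩
      · exact ⟨ka, Or.inl ⟨h1, h2⟩⟩
      · exact ⟨ka, Or.inr ⟨h1, h2⟩⟩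
    by_cases hapb : a = pb
    · subst hapb
      rcases hshb with ⟨h1, h2⟩ | ⟨h1, h2⟩
      · exact ⟨kb, Or.inr ⟨h2, h1⟩⟩
      · exact ⟨kb, Or.inl ⟨h2, h1⟩⟩
    exfalso
    have hapa : a ≠ pa := by
      rcases hsha with ⟨h1, h2⟩ | ⟨h1, h2⟩
      · rw [h1, h2]; exact fun hc => hxy _ _ hc.symm
      · rw [h1, h2]; exact hxy _ _
    have hbpb : b ≠ pb := by
      rcases hshb with ⟨h1, h2⟩ | ⟨h1, h2⟩
      · rw [h1, h2]; exact fun hc => hxy _ _ hc.symm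
      · rw [h1, h2]; exact hxy _ _
    have hpapb : pa ≠ pb := by
      intro he
      rcases hsha with ⟨h1, h2⟩ | ⟨h1, h2⟩ <;> rcases hshb with ⟨h3, h4⟩ | ⟨h3, h4⟩
      · have hk : ka = kb := add_right_cancel (hxinj (ka + 1) (kb + 1)
          (by rw [← h2, he]; exact h4))
        exact hab (by rw [h1, h3, hk])
      · exact hxy (ka + 1) kb (by rw [← h2, he]; exact h4)
      · exact hxy (kb + 1) ka (by rw [← h4, ← he]; exact h2)
      · have hk : ka = kb := hyinj ka kb (by rw [← h2, he]; exact h4)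
        exact hab (by rw [h1, h3, hk])
    have hmpa : pa ∈ loopStates x y := by
      rcases hsha with ⟨_, h2⟩ | ⟨_, h2⟩
      · rw [h2]; exact hmemx _
      · rw [h2]; exact hmemy _
    have hmpb : pb ∈ loopStates x y := by
      rcases hshb with ⟨_, h2⟩ | ⟨_, h2⟩
      · rw [h2]; exact hmemx _
      · rw [h2]; exact hmemy _
    exact hT ⟨a, b, pa, pb, ha, hb, hmpa, hmpb, hab, hapa, hapb, hbpa, hbpb, hpapb,
      hF, hFa, F.iseqv.trans hF hFb⟩
  -- each subloop pair coincides (as a pair) with a pair of the original loop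
  have hmemx' : ∀ i : ZMod m', x' i ∈ loopStates x' y' := fun i => Or.inl ⟨i, rfl⟩
  have hmemy' : ∀ i : ZMod m', y' i ∈ loopStates x' y' := fun i => Or.inr ⟨i, rfl⟩
  have pairSpec : ∀ i : ZMod m', ∃ j : ZMod m,
      (x' i = x j ∧ y' i = y j) ∨ (x' i = y j ∧ y' i = x j) := by
    intro i
    obtain ⟨jx, hjx⟩ := hmem (x' i) (hsub (hmemx' i))
    obtain ⟨jy, hjy⟩ := hmem (y' i) (hsub (hmemy' i))
    have hjj : jx = jy := hPairUniq _ _ jx jy hjx hjy (hl'.pair_ckc i)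
    subst hjj
    rcases hjx with h1 | h1 <;> rcases hjy with h2 | h2
    · exact absurd (h1.trans h2.symm) (hl'.pair_ne i)
    · exact ⟨jx, Or.inl ⟨h1, h2⟩⟩
    · exact ⟨jx, Or.inr ⟨h1, h2⟩⟩
    · exact absurd (h1.trans h2.symm) (hl'.pair_ne i)
  choose p hp using pairSpec
  have hpne : ∀ i : ZMod m', p i ≠ p (i + 1) := by
    intro i he
    apply hl'.ckc_ne i
    have h1 : ckcRel Pl (x (p i)) (x' i) := by
      rcases hp i with ⟨h, _⟩ | ⟨h, _⟩
      · rw [h]; exact crefl _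
      · rw [h]; exact hloop.pair_ckc _
    have h2 : ckcRel Pl (x (p (i + 1))) (x' (i + 1)) := by
      rcases hp (i + 1) with ⟨h, _⟩ | ⟨h, _⟩
      · rw [h]; exact crefl _
      · rw [h]; exact hloop.pair_ckc _
    rw [← he] at h2
    exact ctrans (csymm h1) h2
  have hlink' : ∀ i : ZMod m',
      ∃ j : ZMod m, (y' i = y j ∧ x' (i + 1) = x (j + 1)) ∨
        (y' i = x (j + 1) ∧ x' (i + 1) = y j) := by
    intro i
    refine keyLink _ _ (hsub (hmemy' i)) (hsub (hmemx' (i + 1))) ?_ (hl'.link i)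
    intro he
    apply hpne i
    have h1 : y' i = x (p i) ∨ y' i = y (p i) := by
      rcases hp i with ⟨_, hy⟩ | ⟨_, hy⟩
      · exact Or.inr hy
      · exact Or.inl hy
    have h2 : x' (i + 1) = x (p (i + 1)) ∨ x' (i + 1) = y (p (i + 1)) := by
      rcases hp (i + 1) with ⟨hx2, _⟩ | ⟨hx2, _⟩
      · exact Or.inl hx2
      · exact Or.inr hx2
    exact hPairUniq (y' i) (x' (i + 1)) (p i) (p (i + 1)) h1 h2 (by rw [he]; exact crefl _)
  have step : ∀ i : ZMod m',
      (x' i = x (p i) → x' (i + 1) = x (p (i + 1)) ∧ p (i + 1) = p i + 1) ∧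
      (x' i = y (p i) → x' (i + 1) = y (p (i + 1)) ∧ p (i + 1) = p i - 1) := by
    intro i
    obtain ⟨j, hc⟩ := hlink' i
    rcases hc with ⟨h1, h2⟩ | ⟨h1, h2⟩
    · -- straight step
      have hpij : p i = j := by
        rcases hp i with ⟨_, hy⟩ | ⟨_, hy⟩
        · exact hyinj _ _ (hy.symm.trans h1)
        · exact absurd (hy.symm.trans h1) (hxy _ _)
      have hpi1 : p (i + 1) = j + 1 ∧ x' (i + 1) = x (p (i + 1)) := by
        rcases hp (i + 1) with ⟨hx1, _⟩ | ⟨hx1, _⟩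
        · exact ⟨hxinj _ _ (hx1.symm.trans h2), hx1⟩
        · exact absurd (hx1.symm.trans h2).symm (hxy _ _)
      refine ⟨fun _ => ⟨hpi1.2, by rw [hpi1.1, hpij]⟩, fun hxe => ?_⟩
      rcases hp i with ⟨hx0, _⟩ | ⟨_, hy0⟩
      · exact absurd (hx0.symm.trans hxe) (hxy _ _)
      · exact absurd (hy0.symm.trans h1) (hxy _ _)
    · -- flipped step
      have hpij : p i = j + 1 := by
        rcases hp i with ⟨_, hy⟩ | ⟨_, hy⟩
        · exact absurd (hy.symm.trans h1).symm (hxy _ _)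
        · exact (hxinj _ _ (hy.symm.trans h1))
      have hpi1 : p (i + 1) = j ∧ x' (i + 1) = y (p (i + 1)) := by
        rcases hp (i + 1) with ⟨hx1, _⟩ | ⟨hx1, _⟩
        · exact absurd (hx1.symm.trans h2) (hxy _ _)
        · exact ⟨hyinj _ _ (hx1.symm.trans h2), hx1⟩
      refine ⟨fun hxe => ?_, fun _ => ⟨hpi1.2, by rw [hpi1.1, hpij]; ring⟩⟩
      rcases hp i with ⟨_, hy0⟩ | ⟨hx0, _⟩
      · exact absurd (hy0.symm.trans h1).symm (hxy _ _)
      · exact absurd (hxe.symm.trans hx0) (hxy _ _)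
  have iter : ∀ k : ℕ,
      (x' 0 = x (p 0) →
        x' (k : ZMod m') = x (p (k : ZMod m')) ∧ p (k : ZMod m') = p 0 + (k : ZMod m)) ∧
      (x' 0 = y (p 0) →
        x' (k : ZMod m') = y (p (k : ZMod m')) ∧ p (k : ZMod m') = p 0 - (k : ZMod m)) := by
    intro k
    induction k with
    | zero => constructor <;> intro h <;> simp [h]
    | succ k ih =>
      have hcast : ((k + 1 : ℕ) : ZMod m') = (k : ZMod m') + 1 := by push_cast; ring
      have hcast2 : ((k + 1 : ℕ) : ZMod m) = (k : ZMod m) + 1 := by push_cast; ring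
      rw [hcast, hcast2]
      constructor
      · intro h
        obtain ⟨hxk, hpk⟩ := ih.1 h
        obtain ⟨hxk1, hpk1⟩ := (step (k : ZMod m')).1 hxk
        exact ⟨hxk1, by rw [hpk1, hpk]; ring⟩
      · intro h
        obtain ⟨hxk, hpk⟩ := ih.2 h
        obtain ⟨hxk1, hpk1⟩ := (step (k : ZMod m')).2 hxk
        exact ⟨hxk1, by rw [hpk1, hpk]; ring⟩
  -- the subloop covers all states of the original loop: contradiction
  have hcov : ∀ j : ZMod m, x j ∈ loopStates x' y' ∧ y j ∈ loopStates x' y' := by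
    intro j
    rcases hp 0 with ⟨h0, _⟩ | ⟨h0, _⟩
    · set k : ℕ := (j - p 0).val with hk
      obtain ⟨hxk, hpk⟩ := (iter k).1 h0
      have hcastv : ((k : ℕ) : ZMod m) = j - p 0 := by
        rw [hk]; exact ZMod.natCast_rightInverse _
      rw [hcastv] at hpk
      have hpj : p (k : ZMod m') = j := by rw [hpk]; ring
      have hyk : y' (k : ZMod m') = y (p (k : ZMod m')) := by
        rcases hp (k : ZMod m') with ⟨_, hy⟩ | ⟨hx2, _⟩
        · exact hy
        · exact absurd (hxk.symm.trans hx2) (hxy _ _)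
      refine ⟨Or.inl ⟨(k : ZMod m'), ?_⟩, Or.inr ⟨(k : ZMod m'), ?_⟩⟩
      · rw [hxk, hpj]
      · rw [hyk, hpj]
    · set k : ℕ := (p 0 - j).val with hk
      obtain ⟨hxk, hpk⟩ := (iter k).2 h0
      have hcastv : ((k : ℕ) : ZMod m) = p 0 - j := by
        rw [hk]; exact ZMod.natCast_rightInverse _
      rw [hcastv] at hpk
      have hpj : p (k : ZMod m') = j := by rw [hpk]; ring
      have hyk : y' (k : ZMod m') = x (p (k : ZMod m')) := by
        rcases hp (k : ZMod m') with ⟨hx2, _⟩ | ⟨_, hy⟩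
        · exact absurd (hx2.symm.trans hxk) (hxy _ _)
        · exact hy
      refine ⟨Or.inr ⟨(k : ZMod m'), ?_⟩, Or.inl ⟨(k : ZMod m'), ?_⟩⟩
      · rw [hyk, hpj]
      · rw [hxk, hpj]
  apply hnsub
  intro s hs
  obtain ⟨j, rfl | rfl⟩ := hmem s hs
  · exact (hcov j).1
  · exact (hcov j).2

end Oracles
end

section
/- Assume that for each i ∈ {1, 2}: F_i refines F_{3−i} in every CKC; every F_i-loop is F_{3−i}-covered; and every irreducible F_i-loop with at least 6 states is, as the same sequence of states, an irreducible F_{3−i}-loop. Let C_A be a cluster (the union of all CKCs containing a pair of some loop in a maximal connected family of type-2 irreducible F₁-loops). Then for all ω, ω' ∈ C_A, F₁(ω) = F₁(ω') implies F₂(ω) = F₂(ω') (every F₂-measurable function on C_A is F₁-measurable). -/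
open scoped Classical

namespace Oracles

variable {Ω : Type}

/-- The one-sided equivalence conditions for the ordered pair of partitions
`(F, F')`: refinement in every CKC, every `F`-loop is `F'`-covered, and every
irreducible `F`-loop with at least 6 states is (as the same sequence of states)
an irreducible `F'`-loop. -/
def OneSideConds {n : ℕ} (Pl : Fin n → Setoid Ω) (F F' : Setoid Ω) : Prop :=
  RefinesInCKC Pl F F' ∧
  (∀ (m : ℕ) (x y : ZMod m → Ω), IsLoop Pl F m x y → Covered Pl F' x y) ∧
  ∀ (m : ℕ) (x y : ZMod m → Ω), IsLoop Pl F m x y → IsIrreducible Pl F x y →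
    3 ≤ m → IsLoop Pl F' m x y ∧ IsIrreducible Pl F' x y

/-- A bundled `F`-loop. -/
structure Loop {n : ℕ} (Pl : Fin n → Setoid Ω) (F : Setoid Ω) where
  m : ℕ
  x : ZMod m → Ω
  y : ZMod m → Ω
  isLoop : IsLoop Pl F m x y

/-- Two loops share a CKC if some CKC contains a pair of each of them. -/
def ShareCKC {n : ℕ} {Pl : Fin n → Setoid Ω} {F : Setoid Ω}
    (L L' : Loop Pl F) : Prop :=
  ∃ j j', ckcRel Pl (L.x j) (L'.x j')

/-- A connected family of type-2 irreducible loops: any two of its members are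
joined by a finite chain of members, consecutive ones sharing a CKC. -/
def IsConnectedFamily {n : ℕ} {Pl : Fin n → Setoid Ω} {F : Setoid Ω}
    (𝒜 : Set (Loop Pl F)) : Prop :=
  (∀ L ∈ 𝒜, Type2Irreducible F L.x L.y) ∧
  ∀ L ∈ 𝒜, ∀ L' ∈ 𝒜,
    Relation.ReflTransGen (fun a b => a ∈ 𝒜 ∧ b ∈ 𝒜 ∧ ShareCKC a b) L L'

/-- A maximal (nonempty) connected family of type-2 irreducible loops. -/
def IsMaximalConnectedFamily {n : ℕ} {Pl : Fin n → Setoid Ω} {F : Setoid Ω}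
    (𝒜 : Set (Loop Pl F)) : Prop :=
  𝒜.Nonempty ∧ IsConnectedFamily 𝒜 ∧
    ∀ ℬ : Set (Loop Pl F), IsConnectedFamily ℬ → 𝒜 ⊆ ℬ → ℬ = 𝒜

/-- The union of all CKCs that contain a pair of some loop of the family. -/
def clusterOf {n : ℕ} {Pl : Fin n → Setoid Ω} {F : Setoid Ω}
    (𝒜 : Set (Loop Pl F)) : Set Ω :=
  {ω | ∃ L ∈ 𝒜, ∃ j, ckcRel Pl ω (L.x j)}

/-- A cluster: the union of all CKCs containing a pair of some loop of a maximal
connected family of type-2 irreducible loops. -/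
def IsCluster {n : ℕ} (Pl : Fin n → Setoid Ω) (F : Setoid Ω) (C : Set Ω) : Prop :=
  ∃ 𝒜 : Set (Loop Pl F), IsMaximalConnectedFamily 𝒜 ∧ C = clusterOf 𝒜

/-- `Ω*`: the collection of all clusters together with all CKCs not contained in
any cluster. -/
def OmegaStar {n : ℕ} (Pl : Fin n → Setoid Ω) (F : Setoid Ω) : Set (Set Ω) :=
  {C | IsCluster Pl F C} ∪
    {C | (∃ ω, C = {ω' | ckcRel Pl ω ω'}) ∧ ∀ D, IsCluster Pl F D → ¬ C ⊆ D}

/-!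
Inside one CKC the claim is the refinement hypothesis. Otherwise the loops of the family join
the CKC of `ω'` to that of `ω` by a chain of `F₁`-links that avoids the `F₁`-block of `ω`:
type-2 irreducibility leaves at most one link of each loop in that block, and one can go around
the loop the other way. A shortest such chain passes through distinct CKCs and distinct blocks,
so closing it up with the link `ω ~ ω'` gives an `F₁`-loop that is irreducible because each of
its states has only one possible partner in it. With at least three pairs this loop is an
`F₂`-loop by hypothesis; with two pairs it is fully informative, and `F₂`-coveredness makes it an
`F₂`-loop too. Its closing link then says `F₂(ω) = F₂(ω')`.
-/

section

theorem forall_zmod_of_add_one {m : ℕ} [NeZero m] {P : ZMod m → Prop} (a : ZMod m)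
    (ha : P a) (hstep : ∀ j, j + 1 ≠ a → P j → P (j + 1)) (j : ZMod m) : P j := by
  have key : ∀ t : ℕ, t < m → P (a + t) := by
    intro t
    induction t with
    | zero => intro _; simpa using ha
    | succ t ih =>
      intro ht
      have hne : a + t + 1 ≠ a := by
        intro h
        have h0 : ((t + 1 : ℕ) : ZMod m) = 0 := by push_cast; linear_combination h
        have := Nat.le_of_dvd (by omega) ((ZMod.natCast_eq_zero_iff _ _).mp h0)
        omega
      simpa [add_assoc] using hstep _ hne (ih (by omega))
  simpa using key (j - a).val (ZMod.val_lt _)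

variable {n : ℕ} {Pl : Fin n → Setoid Ω} {F F₁ F₂ : Setoid Ω}

theorem ckcRel_equivalence (Pl : Fin n → Setoid Ω) : Equivalence (ckcRel Pl) :=
  (⨆ i, Pl i).iseqv

namespace IsLoop

variable {m : ℕ} {x y : ZMod m → Ω}

theorem not_ckcRel_link (hL : IsLoop Pl F m x y) (j : ZMod m) :
    ¬ ckcRel Pl (y j) (x (j + 1)) :=
  fun h => hL.ckc_ne j ((ckcRel_equivalence Pl).trans (hL.pair_ckc j) h)

theorem link_ne (hL : IsLoop Pl F m x y) (j : ZMod m) : y j ≠ x (j + 1) :=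
  fun h => hL.not_ckcRel_link j (h ▸ (ckcRel_equivalence Pl).refl _)

theorem exists_ckc_partner (hL : IsLoop Pl F m x y) {s : Ω} (hs : s ∈ loopStates x y) :
    ∃ s' ∈ loopStates x y, s' ≠ s ∧ ckcRel Pl s s' := by
  rcases hs with ⟨j, rfl⟩ | ⟨j, rfl⟩
  · exact ⟨y j, Or.inr ⟨j, rfl⟩, (hL.pair_ne j).symm, hL.pair_ckc j⟩
  · exact ⟨x j, Or.inl ⟨j, rfl⟩, hL.pair_ne j, (ckcRel_equivalence Pl).symm (hL.pair_ckc j)⟩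

theorem exists_link_partner (hL : IsLoop Pl F m x y) {s : Ω} (hs : s ∈ loopStates x y) :
    ∃ s' ∈ loopStates x y, s' ≠ s ∧ F.r s s' := by
  rcases hs with ⟨j, rfl⟩ | ⟨j, rfl⟩
  · have hlink := hL.link (j - 1)
    have hne := hL.link_ne (j - 1)
    rw [sub_add_cancel] at hlink hne
    exact ⟨y (j - 1), Or.inr ⟨j - 1, rfl⟩, hne, F.symm' hlink⟩
  · exact ⟨x (j + 1), Or.inl ⟨j + 1, rfl⟩, (hL.link_ne j).symm, hL.link j⟩

theorem eq_of_type2Irreducible (hL : IsLoop Pl F m x y) (h2 : Type2Irreducible F x y)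
    {w : Ω} {j k : ZMod m} (hj : F.r (y j) w) (hk : F.r (y k) w) : j = k := by
  by_contra hjk
  have hd : Disjoint ({y j, x (j + 1)} : Set Ω) {y k, x (k + 1)} :=
    Set.disjoint_iff_inter_eq_empty.mpr (hL.link_disjoint j k hjk)
  have hjk' : F.r (y j) (y k) := F.trans' hj (F.symm' hk)
  exact h2 ⟨y j, x (j + 1), y k, x (k + 1), Or.inr ⟨j, rfl⟩, Or.inl ⟨_, rfl⟩,
    Or.inr ⟨k, rfl⟩, Or.inl ⟨_, rfl⟩, hL.link_ne j, hd.ne_of_mem (by simp) (by simp),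
    hd.ne_of_mem (by simp) (by simp), hd.ne_of_mem (by simp) (by simp),
    hd.ne_of_mem (by simp) (by simp), hL.link_ne k, hL.link j, hjk',
    F.trans' hjk' (hL.link k)⟩

end IsLoop

theorem IsLoop.link_of_covered_of_two {x y : ZMod 2 → Ω} (hL : IsLoop Pl F₁ 2 x y)
    (hinf : FullyInformative F₁ x y) (hcov : Covered Pl F₂ x y)
    (h21 : RefinesInCKC Pl F₂ F₁) (j : ZMod 2) : F₂.r (y j) (x (j + 1)) := by
  obtain ⟨r, I, -, hunion, hloops⟩ := hcov
  have hj : j ∈ ⋃ t, I t := by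
    rw [hunion]
    exact fun h => hinf j (h21 _ _ (hL.pair_ckc j) h)
  obtain ⟨t, ht⟩ := Set.mem_iUnion.mp hj
  obtain ⟨mt, e, he, hrange, hLt⟩ := hloops t
  obtain ⟨i, rfl⟩ : j ∈ Set.range e := hrange ▸ ht
  have : Nontrivial (ZMod mt) := ZMod.nontrivial_iff.mpr (by have := hLt.two_le; omega)
  have hne : e (i + 1) ≠ e i := fun h => one_ne_zero (by linear_combination he h)
  have hsucc : ∀ a b : ZMod 2, a ≠ b → a = b + 1 := by decide
  simpa [hsucc _ _ hne] using hLt.link i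

structure IsCleanCycle (Pl : Fin n → Setoid Ω) (F : Setoid Ω) (m : ℕ)
    (x y : ZMod m → Ω) : Prop where
  two_le : 2 ≤ m
  pair_ckc : ∀ j, ckcRel Pl (x j) (y j)
  link : ∀ j, F.r (y j) (x (j + 1))
  ckc_inj : ∀ j k, ckcRel Pl (x j) (x k) → j = k
  block_inj : ∀ j k, F.r (y j) (y k) → j = k

namespace IsCleanCycle

variable {m : ℕ} {x y : ZMod m → Ω}

theorem nontrivial (hc : IsCleanCycle Pl F m x y) : Nontrivial (ZMod m) :=
  ZMod.nontrivial_iff.mpr (by have := hc.two_le; omega)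

theorem eq_add_one_of_link (hc : IsCleanCycle Pl F m x y) {j k : ZMod m}
    (h : F.r (y j) (x k)) : k = j + 1 := by
  have hk := hc.link (k - 1)
  rw [sub_add_cancel] at hk
  rw [hc.block_inj _ _ (F.trans' h (F.symm' hk)), sub_add_cancel]

theorem fullyInformative (hc : IsCleanCycle Pl F m x y) : FullyInformative F x y := by
  have := hc.nontrivial
  intro j h
  have hl := hc.link (j - 1)
  rw [sub_add_cancel] at hl
  have hj := hc.block_inj _ _ (F.trans' hl h)
  exact one_ne_zero (by linear_combination -hj : (1 : ZMod m) = 0)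

theorem isLoop (hc : IsCleanCycle Pl F m x y) : IsLoop Pl F m x y where
  two_le := hc.two_le
  pair_ne j h := hc.fullyInformative j (h ▸ F.refl' _)
  pair_ckc := hc.pair_ckc
  link := hc.link
  ckc_ne j h := by
    have := hc.nontrivial
    have hj := hc.ckc_inj _ _ h
    exact one_ne_zero (by linear_combination -hj : (1 : ZMod m) = 0)
  link_disjoint j k hjk := by
    have hblock : ∀ {i s}, s ∈ ({y i, x (i + 1)} : Set Ω) → F.r (y i) s := by
      rintro i s (rfl | rfl)
      exacts [F.refl' _, hc.link i]
    refine Set.eq_empty_iff_forall_notMem.mpr fun s ⟨hj, hk⟩ => hjk ?_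
    exact hc.block_inj _ _ (F.trans' (hblock hj) (F.symm' (hblock hk)))

theorem isIrreducible (hc : IsCleanCycle Pl F m x y) : IsIrreducible Pl F x y := by
  have : NeZero m := ⟨by have := hc.two_le; omega⟩
  have ckc := ckcRel_equivalence Pl
  rintro ⟨m', x', y', hL, hsub, hsup⟩
  apply hsup
  have x_of_ckc : ∀ {s j}, s ∈ loopStates x y → s ≠ y j → ckcRel Pl (y j) s → s = x j := by
    rintro s j (⟨k, rfl⟩ | ⟨k, rfl⟩) hne h
    · rw [hc.ckc_inj j k (ckc.trans (hc.pair_ckc j) h)]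
    · exact absurd (by rw [hc.ckc_inj j k (ckc.trans (hc.pair_ckc j)
        (ckc.trans h (ckc.symm (hc.pair_ckc k))))]) hne
  have y_of_ckc : ∀ {s j}, s ∈ loopStates x y → s ≠ x j → ckcRel Pl (x j) s → s = y j := by
    rintro s j (⟨k, rfl⟩ | ⟨k, rfl⟩) hne h
    · exact absurd (by rw [hc.ckc_inj j k h]) hne
    · rw [hc.ckc_inj j k (ckc.trans h (ckc.symm (hc.pair_ckc k)))]
  have x_of_link : ∀ {s j}, s ∈ loopStates x y → s ≠ y j → F.r (y j) s → s = x (j + 1) := by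
    rintro s j (⟨k, rfl⟩ | ⟨k, rfl⟩) hne h
    · rw [hc.eq_add_one_of_link h]
    · exact absurd (by rw [hc.block_inj j k h]) hne
  -- the states of the sub-loop are closed under `y j ↦ x (j + 1) ↦ y (j + 1)`
  have hx : ∀ j, y j ∈ loopStates x' y' → x (j + 1) ∈ loopStates x' y' := by
    intro j hy
    obtain ⟨s, hs, hne, h⟩ := hL.exists_link_partner hy
    exact x_of_link (hsub hs) hne h ▸ hs
  have hy : ∀ j, x j ∈ loopStates x' y' → y j ∈ loopStates x' y' := by
    intro j hx
    obtain ⟨s, hs, hne, h⟩ := hL.exists_ckc_partner hx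
    exact y_of_ckc (hsub hs) hne h ▸ hs
  obtain ⟨j₀, hj₀⟩ : ∃ j, y j ∈ loopStates x' y' := by
    obtain ⟨j, hj | hj⟩ : ∃ j, x' 0 = x j ∨ x' 0 = y j := by
      rcases hsub (Or.inl ⟨0, rfl⟩ : x' 0 ∈ loopStates x' y') with ⟨j, hj⟩ | ⟨j, hj⟩
      exacts [⟨j, Or.inl hj.symm⟩, ⟨j, Or.inr hj.symm⟩]
    · exact ⟨j, hy j (hj ▸ Or.inl ⟨0, rfl⟩)⟩
    · exact ⟨j, hj ▸ Or.inl ⟨0, rfl⟩⟩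
  have hyall := forall_zmod_of_add_one j₀ hj₀ fun j _ h => hy _ (hx j h)
  rintro s (⟨j, rfl⟩ | ⟨j, rfl⟩)
  · simpa using hx (j - 1) (hyall _)
  · exact hyall j

theorem link_of_oneSideConds (hc : IsCleanCycle Pl F₁ m x y)
    (h12 : OneSideConds Pl F₁ F₂) (h21 : RefinesInCKC Pl F₂ F₁) (j : ZMod m) :
    F₂.r (y j) (x (j + 1)) := by
  rcases (show m = 2 ∨ 3 ≤ m by have := hc.two_le; omega) with rfl | hm
  · exact hc.isLoop.link_of_covered_of_two hc.fullyInformative (h12.2.1 _ _ _ hc.isLoop) h21 j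
  · exact (h12.2.2 m x y hc.isLoop hc.isIrreducible hm).1.link j

end IsCleanCycle

def AvoidStep (Pl : Fin n → Setoid Ω) (F : Setoid Ω) (w a b : Ω) : Prop :=
  ckcRel Pl a b ∨ (F.r a b ∧ ¬ F.r a w)

instance {w : Ω} : Std.Symm (AvoidStep Pl F w) where
  symm _ _
    | .inl h => .inl ((ckcRel_equivalence Pl).symm h)
    | .inr ⟨h, hw⟩ => .inr ⟨F.symm' h, fun hb => hw (F.trans' h hb)⟩

open Relation

theorem IsLoop.reflTransGen_avoidStep {m : ℕ} {x y : ZMod m → Ω} (hL : IsLoop Pl F m x y)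
    (h2 : Type2Irreducible F x y) (w : Ω) (j k : ZMod m) :
    ReflTransGen (AvoidStep Pl F w) (x j) (x k) := by
  have : NeZero m := ⟨by have := hL.two_le; omega⟩
  have step : ∀ j, ¬ F.r (y j) w → ReflTransGen (AvoidStep Pl F w) (x j) (x (j + 1)) :=
    fun j hj => .head (.inl (hL.pair_ckc j)) (.single (.inr ⟨hL.link j, hj⟩))
  -- type-2 irreducibility leaves at most one link in the block of `w`
  obtain ⟨jb, hjb⟩ : ∃ jb, ∀ j ≠ jb, ¬ F.r (y j) w := by
    by_cases h : ∃ jb, F.r (y jb) w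
    · obtain ⟨jb, hb⟩ := h
      exact ⟨jb, fun j hj hr => hj (hL.eq_of_type2Irreducible h2 hr hb)⟩
    · exact ⟨0, fun j _ hj => h ⟨j, hj⟩⟩
  have hall : ∀ k, ReflTransGen (AvoidStep Pl F w) (x (jb + 1)) (x k) :=
    forall_zmod_of_add_one (jb + 1) .refl fun k hk h =>
      h.trans (step k (hjb k fun e => hk (e ▸ rfl)))
  exact (symm_of _ (hall j)).trans (hall k)

theorem IsConnectedFamily.reflTransGen_avoidStep {𝒜 : Set (Loop Pl F)}
    (hfam : IsConnectedFamily 𝒜) (w : Ω) {L L' : Loop Pl F} (hL : L ∈ 𝒜) (hL' : L' ∈ 𝒜)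
    (j : ZMod L.m) (j' : ZMod L'.m) : ReflTransGen (AvoidStep Pl F w) (L.x j) (L'.x j') := by
  induction hfam.2 L hL L' hL' with
  | refl => exact L.isLoop.reflTransGen_avoidStep (hfam.1 L hL) w j j'
  | tail _ hMM' ih =>
    obtain ⟨hM, hM', jm, jm', hshare⟩ := hMM'
    exact ((ih hM jm).tail (.inl hshare)).trans
      (Loop.isLoop _ |>.reflTransGen_avoidStep (hfam.1 _ hM') w jm' j')

theorem reflTransGen_avoidStep_of_mem_clusterOf {𝒜 : Set (Loop Pl F)}
    (hfam : IsConnectedFamily 𝒜) (w : Ω) {s t : Ω} (hs : s ∈ clusterOf 𝒜)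
    (ht : t ∈ clusterOf 𝒜) : ReflTransGen (AvoidStep Pl F w) s t := by
  obtain ⟨L, hL, j, hj⟩ := hs
  obtain ⟨L', hL', j', hj'⟩ := ht
  exact .head (.inl hj) ((hfam.reflTransGen_avoidStep w hL hL' j j').tail
    (.inl ((ckcRel_equivalence Pl).symm hj')))

def skip {α : Type*} (s : ℕ → α) (i d : ℕ) : ℕ → α :=
  fun t => if t < i then s t else s (t + d)

structure IsLinkChain (Pl : Fin n → Setoid Ω) (F : Setoid Ω) (w : Ω) (k : ℕ)
    (x y : ℕ → Ω) : Prop where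
  pair_ckc : ∀ i ≤ k, ckcRel Pl (x i) (y i)
  link : ∀ i < k, F.r (y i) (x (i + 1))
  avoid : ∀ i < k, ¬ F.r (y i) w

namespace IsLinkChain

variable {w : Ω} {k : ℕ} {x y : ℕ → Ω}

theorem const (Pl : Fin n → Setoid Ω) (F : Setoid Ω) (w s : Ω) :
    IsLinkChain Pl F w 0 (fun _ => s) (fun _ => s) where
  pair_ckc _ _ := (ckcRel_equivalence Pl).refl s
  link _ h := absurd h (Nat.not_lt_zero _)
  avoid _ h := absurd h (Nat.not_lt_zero _)

theorem update_last (hc : IsLinkChain Pl F w k x y) {t : Ω} (h : ckcRel Pl (y k) t) :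
    IsLinkChain Pl F w k x (Function.update y k t) where
  pair_ckc i hi := by
    rcases hi.lt_or_eq with hi | rfl
    · simpa [Function.update_of_ne hi.ne] using hc.pair_ckc i hi.le
    · simpa using (ckcRel_equivalence Pl).trans (hc.pair_ckc i le_rfl) h
  link i hi := by simpa [Function.update_of_ne hi.ne] using hc.link i hi
  avoid i hi := by simpa [Function.update_of_ne hi.ne] using hc.avoid i hi

theorem extend (hc : IsLinkChain Pl F w k x y) {t : Ω} (h : F.r (y k) t) (hw : ¬ F.r (y k) w) :
    IsLinkChain Pl F w (k + 1) (Function.update x (k + 1) t) (Function.update y (k + 1) t) where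
  pair_ckc i hi := by
    rcases hi.lt_or_eq with hi | rfl
    · simpa [Function.update_of_ne hi.ne] using hc.pair_ckc i (by omega)
    · simpa using (ckcRel_equivalence Pl).refl t
  link i hi := by
    rcases (Nat.lt_succ_iff.mp hi).lt_or_eq with hi | rfl
    · simpa [Function.update_of_ne (show i ≠ k + 1 by omega),
        Function.update_of_ne (show i + 1 ≠ k + 1 by omega)] using hc.link i hi
    · simpa [Function.update_of_ne (Nat.lt_succ_self i).ne] using h
  avoid i hi := by
    rcases (Nat.lt_succ_iff.mp hi).lt_or_eq with hi | rfl
    · simpa [Function.update_of_ne (Nat.lt_succ_of_lt hi).ne] using hc.avoid i hi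
    · simpa [Function.update_of_ne (Nat.lt_succ_self i).ne] using hw

theorem skip_of_ckcRel (hc : IsLinkChain Pl F w k x y) {i j : ℕ} (hij : i < j) (hjk : j ≤ k)
    (h : ckcRel Pl (x i) (x j)) :
    IsLinkChain Pl F w (k - (j - i)) (skip x (i + 1) (j - i)) (skip y i (j - i)) where
  pair_ckc t ht := by
    rcases lt_trichotomy t i with h' | rfl | h'
    · simpa [skip, h', Nat.lt_succ_of_lt h'] using hc.pair_ckc t (by omega)
    · simpa [skip, show t + (j - t) = j by omega] using
        (ckcRel_equivalence Pl).trans h (hc.pair_ckc j hjk)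
    · simpa [skip, h'.not_gt, show ¬ t < i + 1 by omega] using hc.pair_ckc (t + (j - i)) (by omega)
  link t ht := by
    rcases lt_or_ge t i with h' | h'
    · simpa [skip, h', show t + 1 < i + 1 by omega] using hc.link t (by omega)
    · simpa [skip, h'.not_gt, show ¬ t + 1 < i + 1 by omega,
        show t + 1 + (j - i) = t + (j - i) + 1 by omega] using hc.link (t + (j - i)) (by omega)
  avoid t ht := by
    unfold skip
    split_ifs
    exacts [hc.avoid t (by omega), hc.avoid _ (by omega)]

theorem skip_of_rel (hc : IsLinkChain Pl F w k x y) {i j : ℕ} (hij : i < j) (hjk : j < k)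
    (h : F.r (y i) (y j)) :
    IsLinkChain Pl F w (k - (j - i)) (skip x (i + 1) (j - i)) (skip y (i + 1) (j - i)) where
  pair_ckc t ht := by
    unfold skip
    split_ifs
    exacts [hc.pair_ckc t (by omega), hc.pair_ckc _ (by omega)]
  link t ht := by
    rcases lt_trichotomy t i with h' | rfl | h'
    · simpa [skip, Nat.lt_succ_of_lt h', h'] using hc.link t (by omega)
    · simpa [skip, show t + 1 + (j - t) = j + 1 by omega] using F.trans' h (hc.link j hjk)
    · simpa [skip, show ¬ t < i by omega, show ¬ t < i + 1 by omega,
        show t + 1 + (j - i) = t + (j - i) + 1 by omega] using hc.link (t + (j - i)) (by omega)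
  avoid t ht := by
    unfold skip
    split_ifs
    exacts [hc.avoid t (by omega), hc.avoid _ (by omega)]

theorem isCleanCycle (hc : IsLinkChain Pl F w k x y) (hk : 1 ≤ k) (hclose : F.r (y k) (x 0))
    (hx : ∀ i ≤ k, ∀ j ≤ k, ckcRel Pl (x i) (x j) → i = j)
    (hy : ∀ i ≤ k, ∀ j ≤ k, F.r (y i) (y j) → i = j) :
    IsCleanCycle Pl F (k + 1) (fun j => x j.val) (fun j => y j.val) where
  two_le := by omega
  pair_ckc j := hc.pair_ckc _ (Nat.lt_succ_iff.mp j.val_lt)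
  link j := by
    have hj := Nat.lt_succ_iff.mp j.val_lt
    rw [ZMod.val_add, ZMod.val_one'' (by omega)]
    rcases hj.lt_or_eq with hj | hj
    · simpa [Nat.mod_eq_of_lt (show j.val + 1 < k + 1 by omega)] using hc.link _ hj
    · simpa [hj] using hclose
  ckc_inj j j' h :=
    ZMod.val_injective _ (hx _ (Nat.lt_succ_iff.mp j.val_lt) _ (Nat.lt_succ_iff.mp j'.val_lt) h)
  block_inj j j' h :=
    ZMod.val_injective _ (hy _ (Nat.lt_succ_iff.mp j.val_lt) _ (Nat.lt_succ_iff.mp j'.val_lt) h)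

end IsLinkChain

theorem exists_isLinkChain_of_reflTransGen {w s t : Ω}
    (h : ReflTransGen (AvoidStep Pl F w) s t) :
    ∃ k x y, IsLinkChain Pl F w k x y ∧ x 0 = s ∧ y k = t := by
  induction h with
  | refl => exact ⟨0, _, _, IsLinkChain.const Pl F w s, rfl, rfl⟩
  | tail _ hstep ih =>
    obtain ⟨k, x, y, hc, hx0, rfl⟩ := ih
    rcases hstep with hckc | ⟨hF, hw⟩
    · exact ⟨k, x, _, hc.update_last hckc, hx0, by simp⟩
    · exact ⟨k + 1, _, _, hc.extend hF hw, by simpa using hx0, by simp⟩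

theorem exists_isLinkChain_injective {w s : Ω}
    (h : ∃ k x y, IsLinkChain Pl F w k x y ∧ x 0 = s ∧ y k = w) :
    ∃ k x y, IsLinkChain Pl F w k x y ∧ x 0 = s ∧ y k = w ∧
      (∀ i ≤ k, ∀ j ≤ k, ckcRel Pl (x i) (x j) → i = j) ∧
      (∀ i ≤ k, ∀ j ≤ k, F.r (y i) (y j) → i = j) := by
  classical
  obtain ⟨x, y, hc, hx0, hyk⟩ := Nat.find_spec h
  -- a repeated CKC or block along a shortest chain could be skipped
  have shortest : ∀ d, 0 < d → d ≤ Nat.find h →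
      ∀ x' y', IsLinkChain Pl F w (Nat.find h - d) x' y' → x' 0 = s →
        y' (Nat.find h - d) ≠ w :=
    fun d hd hdk x' y' hc' hx' hy' => Nat.find_min h (by omega : Nat.find h - d < Nat.find h)
      ⟨x', y', hc', hx', hy'⟩
  refine ⟨_, x, y, hc, hx0, hyk, ?_, ?_⟩
  · intro i hi j hj hxx
    by_contra hne
    wlog hlt : i < j generalizing i j
    · exact this j hj i hi ((ckcRel_equivalence Pl).symm hxx) (Ne.symm hne) (by omega)
    refine shortest (j - i) (by omega) (by omega) _ _ (hc.skip_of_ckcRel hlt hj hxx)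
      (by simpa [skip] using hx0) ?_
    simpa [skip, show ¬ Nat.find h - (j - i) < i by omega,
      show Nat.find h - (j - i) + (j - i) = Nat.find h by omega] using hyk
  · intro i hi j hj hyy
    by_contra hne
    wlog hlt : i < j generalizing i j
    · exact this j hj i hi (F.symm' hyy) (Ne.symm hne) (by omega)
    rcases hj.lt_or_eq with hj | rfl
    · refine shortest (j - i) (by omega) (by omega) _ _ (hc.skip_of_rel hlt hj hyy)
        (by simpa [skip] using hx0) ?_
      simpa [skip, show ¬ Nat.find h - (j - i) < i + 1 by omega,
        show Nat.find h - (j - i) + (j - i) = Nat.find h by omega] using hyk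
    · exact hc.avoid i hlt (hyk ▸ hyy)

theorem rel_of_reflTransGen_avoidStep (h12 : OneSideConds Pl F₁ F₂)
    (h21 : RefinesInCKC Pl F₂ F₁) {w w' : Ω} (hF : F₁.r w w') (hnc : ¬ ckcRel Pl w w')
    (hreach : ReflTransGen (AvoidStep Pl F₁ w) w' w) : F₂.r w w' := by
  obtain ⟨k, x, y, hc, hx0, hyk, hx, hy⟩ :=
    exists_isLinkChain_injective (exists_isLinkChain_of_reflTransGen hreach)
  have hk : 1 ≤ k := by
    by_contra hk0
    obtain rfl : k = 0 := by omega
    exact hnc ((ckcRel_equivalence Pl).symm (hx0 ▸ hyk ▸ hc.pair_ckc 0 le_rfl))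
  have hcyc := hc.isCleanCycle hk (hyk ▸ hx0 ▸ hF) hx hy
  simpa [ZMod.val_neg_one, hx0, hyk] using hcyc.link_of_oneSideConds h12 h21 (-1)

end

theorem cluster_measurability_general
    {Ω : Type} {n : ℕ}
    (Pl : Fin n → Setoid Ω) (F₁ F₂ : Setoid Ω)
    (h12 : OneSideConds Pl F₁ F₂) (h21 : OneSideConds Pl F₂ F₁)
    (𝒜 : Set (Loop Pl F₁)) (hmax : IsMaximalConnectedFamily 𝒜) :
    ∀ ω ∈ clusterOf 𝒜, ∀ ω' ∈ clusterOf 𝒜,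
      F₁.r ω ω' → F₂.r ω ω' := by
  intro ω hω ω' hω' hF
  by_cases hckc : ckcRel Pl ω ω'
  · exact h12.1 ω ω' hckc hF
  · exact rel_of_reflTransGen_avoidStep h12 h21.1 hF hckc
      (reflTransGen_avoidStep_of_mem_clusterOf hmax.2.1 ω hω' hω)

/-- **Observation (measurability over clusters).**
Under the two-sided equivalence conditions, if `C_A` is a cluster (the union of
all CKCs containing a pair of some loop in a maximal connected family of type-2
irreducible `F₁`-loops), then for all `ω, ω' ∈ C_A`, `F₁(ω) = F₁(ω')` implies
`F₂(ω) = F₂(ω')`. -/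
theorem cluster_measurability
    {Ω : Type} [Fintype Ω] [Nonempty Ω] {n : ℕ} (hn : 2 ≤ n)
    (Pl : Fin n → Setoid Ω) (F₁ F₂ : Setoid Ω)
    (h12 : OneSideConds Pl F₁ F₂) (h21 : OneSideConds Pl F₂ F₁)
    (𝒜 : Set (Loop Pl F₁)) (hmax : IsMaximalConnectedFamily 𝒜) :
    ∀ ω ∈ clusterOf 𝒜, ∀ ω' ∈ clusterOf 𝒜,
      F₁.r ω ω' → F₂.r ω ω' :=
  cluster_measurability_general Pl F₁ F₂ h12 h21 𝒜 hmax

end Oracles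
end

section
/- Let Ω* be the collection consisting of all clusters together with all CKCs not contained in any cluster. Then Ω* is a partition of Ω, and for any two distinct elements A₁, A₂ of Ω* there is at most one block B of F₁ with B ∩ A₁ ≠ ∅ and B ∩ A₂ ≠ ∅. -/
open scoped Classical

namespace Oracles

variable {Ω : Type}

/-!
Every member of `Ω*` is a union of CKCs, any two of whose states are joined inside it by a chain
of CKC-steps and `F₁`-steps; members of `Ω*` that meet coincide because overlapping maximal
connected families merge. If two different `F₁`-blocks met both `A₁` and `A₂`, shortest such
chains inside `A₁` and inside `A₂`, cut at their first common `F₁`-block, splice into an `F₁`-loop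
that passes through each `F₁`-block at most once, hence is type-2 irreducible, and has pairs in
both `A₁` and `A₂`. The cluster of its maximal connected family then meets both, so `A₁ = A₂`.
-/

section Walks

variable {n : ℕ} {Pl : Fin n → Setoid Ω} {F : Setoid Ω}

theorem ckcRel.refl (ω : Ω) : ckcRel Pl ω ω := (⨆ i, Pl i).refl' ω

theorem ckcRel.symm {a b : Ω} (h : ckcRel Pl a b) : ckcRel Pl b a := (⨆ i, Pl i).symm' h

theorem ckcRel.trans {a b c : Ω} (h : ckcRel Pl a b) (h' : ckcRel Pl b c) : ckcRel Pl a c :=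
  (⨆ i, Pl i).trans' h h'

def seqCons (a : Ω) (s : ℕ → Ω) : ℕ → Ω
  | 0 => a
  | t + 1 => s t

@[simp] theorem seqCons_zero (a : Ω) (s : ℕ → Ω) : seqCons a s 0 = a := rfl

@[simp] theorem seqCons_succ (a : Ω) (s : ℕ → Ω) (t : ℕ) : seqCons a s (t + 1) = s t := rfl

theorem seqCons_reindex (a : Ω) (s : ℕ → Ω) (i d t : ℕ) :
    seqCons a (fun t => s (if t < i then t else t + d)) t =
      seqCons a s (if t ≤ i then t else t + d) := by
  rcases t with _ | t
  · simp
  · by_cases h : t < i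
    · simp [h, show t + 1 ≤ i by omega]
    · simp [h, show ¬ t + 1 ≤ i by omega, show t + 1 + d = t + d + 1 by omega]

def WalkStep (Pl : Fin n → Setoid Ω) (F : Setoid Ω) (A : Set Ω) (u v : Ω) : Prop :=
  u ∈ A ∧ v ∈ A ∧ (ckcRel Pl u v ∨ F.r u v)

/-- A walk in `A` from `p` to `q` through `k` CKC-steps `U t ↦ V t`, each between two different
`F`-blocks; `seqCons p V t` lies in the `F`-block in which the `t`-th step starts. -/
structure IsWalk (Pl : Fin n → Setoid Ω) (F : Setoid Ω) (A : Set Ω) (p q : Ω) (k : ℕ)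
    (U V : ℕ → Ω) : Prop where
  mem_left : ∀ t < k, U t ∈ A
  mem_right : ∀ t < k, V t ∈ A
  ckc : ∀ t < k, ckcRel Pl (U t) (V t)
  not_rel : ∀ t < k, ¬ F.r (U t) (V t)
  enter : ∀ t < k, F.r (seqCons p V t) (U t)
  exit : F.r (seqCons p V k) q

structure IsShortestWalk (Pl : Fin n → Setoid Ω) (F : Setoid Ω) (A : Set Ω) (p q : Ω) (k : ℕ)
    (U V : ℕ → Ω) : Prop extends IsWalk Pl F A p q k U V where
  le_length : ∀ k' U' V', IsWalk Pl F A p q k' U' V' → k ≤ k'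

namespace IsWalk

variable {A : Set Ω} {p q : Ω} {k : ℕ} {U V : ℕ → Ω}

theorem nil (h : F.r p q) : IsWalk Pl F A p q 0 U V where
  mem_left _ h := absurd h (Nat.not_lt_zero _)
  mem_right _ h := absurd h (Nat.not_lt_zero _)
  ckc _ h := absurd h (Nat.not_lt_zero _)
  not_rel _ h := absurd h (Nat.not_lt_zero _)
  enter _ h := absurd h (Nat.not_lt_zero _)
  exit := h

theorem cons {a c : Ω} (ha : a ∈ A) (hc : c ∈ A) (hck : ckcRel Pl a c) (hF : ¬ F.r a c)
    (h : IsWalk Pl F A c q k U V) :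
    IsWalk Pl F A a q (k + 1) (seqCons a U) (seqCons c V) where
  mem_left := by rintro (_ | t) ht; exacts [ha, h.mem_left t (by omega)]
  mem_right := by rintro (_ | t) ht; exacts [hc, h.mem_right t (by omega)]
  ckc := by rintro (_ | t) ht; exacts [hck, h.ckc t (by omega)]
  not_rel := by rintro (_ | t) ht; exacts [hF, h.not_rel t (by omega)]
  enter := by rintro (_ | t) ht; exacts [F.refl' a, h.enter t (by omega)]
  exit := h.exit

theorem of_rel_start {p' : Ω} (hp : F.r p' p) (h : IsWalk Pl F A p q k U V) :
    IsWalk Pl F A p' q k U V :=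
  { h with
    enter := by rintro (_ | t) ht; exacts [F.trans' hp (h.enter 0 ht), h.enter (t + 1) ht]
    exit := by
      rcases k with _ | k
      exacts [F.trans' hp h.exit, h.exit] }

theorem exists_of_reflTransGen {u v : Ω} (h : Relation.ReflTransGen (WalkStep Pl F A) u v) :
    ∃ k U V, IsWalk Pl F A u v k U V := by
  induction h using Relation.ReflTransGen.head_induction_on with
  | refl => exact ⟨0, fun _ => v, fun _ => v, nil (F.refl' v)⟩
  | @head a c hstep _ ih =>
    obtain ⟨k, U, V, hw⟩ := ih
    obtain ⟨ha, hc, hor⟩ := hstep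
    by_cases hF : F.r a c
    · exact ⟨k, U, V, hw.of_rel_start hF⟩
    · exact ⟨k + 1, _, _, hw.cons ha hc (hor.resolve_right hF) hF⟩

/-- Cutting out the steps `i, …, i + d - 1`, which lead from an `F`-block back to itself. -/
theorem skip {i d : ℕ} (hid : i + d ≤ k) (hF : F.r (seqCons p V i) (seqCons p V (i + d)))
    (h : IsWalk Pl F A p q k U V) :
    IsWalk Pl F A p q (k - d) (fun t => U (if t < i then t else t + d))
      (fun t => V (if t < i then t else t + d)) where
  mem_left t ht := by split_ifs <;> exact h.mem_left _ (by omega)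
  mem_right t ht := by split_ifs <;> exact h.mem_right _ (by omega)
  ckc t ht := by split_ifs <;> exact h.ckc _ (by omega)
  not_rel t ht := by split_ifs <;> exact h.not_rel _ (by omega)
  enter t ht := by
    rw [seqCons_reindex]
    rcases lt_trichotomy t i with hti | rfl | hti
    · simp only [hti, hti.le, if_true]; exact h.enter t (by omega)
    · simp only [le_refl, lt_irrefl, if_true, if_false]; exact F.trans' hF (h.enter _ (by omega))
    · simp only [hti.not_gt, hti.not_ge, if_false]; exact h.enter _ (by omega)
  exit := by
    rw [seqCons_reindex]
    by_cases hki : k - d ≤ i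
    · rw [if_pos hki, show k - d = i by omega]
      exact F.trans' hF (by rw [show i + d = k by omega]; exact h.exit)
    · rw [if_neg hki, show k - d + d = k by omega]; exact h.exit

/-- Replacing two consecutive steps inside one CKC by a single step. -/
theorem merge {i : ℕ} (hik : i + 1 < k) (hck : ckcRel Pl (U i) (U (i + 1)))
    (hF : ¬ F.r (U i) (V (i + 1))) (h : IsWalk Pl F A p q k U V) :
    IsWalk Pl F A p q (k - 1) (fun t => U (if t ≤ i then t else t + 1))
      (fun t => V (if t < i then t else t + 1)) where
  mem_left t ht := by split_ifs <;> exact h.mem_left _ (by omega)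
  mem_right t ht := by split_ifs <;> exact h.mem_right _ (by omega)
  ckc t ht := by
    rcases lt_trichotomy t i with hti | rfl | hti
    · simp only [hti, hti.le, if_true]; exact h.ckc t (by omega)
    · simp only [le_refl, lt_irrefl, if_true, if_false]; exact hck.trans (h.ckc _ hik)
    · simp only [hti.not_gt, hti.not_ge, if_false]; exact h.ckc _ (by omega)
  not_rel t ht := by
    rcases lt_trichotomy t i with hti | rfl | hti
    · simp only [hti, hti.le, if_true]; exact h.not_rel t (by omega)
    · simp only [le_refl, lt_irrefl, if_true, if_false]; exact hF
    · simp only [hti.not_gt, hti.not_ge, if_false]; exact h.not_rel _ (by omega)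
  enter t ht := by
    rw [seqCons_reindex]
    by_cases hti : t ≤ i
    · simp only [hti, if_true]; exact h.enter t (by omega)
    · simp only [hti, if_false]; exact h.enter _ (by omega)
  exit := by
    rw [seqCons_reindex, if_neg (by omega), show k - 1 + 1 = k by omega]; exact h.exit

theorem exists_isShortestWalk (h : ∃ k U V, IsWalk Pl F A p q k U V) :
    ∃ k U V, IsShortestWalk Pl F A p q k U V := by
  obtain ⟨U, V, hw⟩ := Nat.find_spec h
  exact ⟨_, U, V, hw, fun k' U' V' hw' => Nat.find_min' h ⟨U', V', hw'⟩⟩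

end IsWalk

namespace IsShortestWalk

variable {A : Set Ω} {p q : Ω} {k : ℕ} {U V : ℕ → Ω}

theorem not_rel_seqCons (h : IsShortestWalk Pl F A p q k U V) {s t : ℕ} (hst : s < t)
    (htk : t ≤ k) : ¬ F.r (seqCons p V s) (seqCons p V t) := by
  intro hF
  obtain ⟨d, rfl⟩ := Nat.exists_eq_add_of_lt hst
  have := h.le_length _ _ _ (h.skip (d := d + 1) (by omega) hF)
  omega

theorem not_ckcRel_succ (h : IsShortestWalk Pl F A p q k U V) {t : ℕ} (ht : t + 1 < k) :
    ¬ ckcRel Pl (U t) (U (t + 1)) := by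
  intro hck
  by_cases hF : F.r (U t) (V (t + 1))
  · exact h.not_rel_seqCons (s := t) (t := t + 2) (by omega) (by omega)
      (F.trans' (h.enter t (by omega)) hF)
  · have := h.le_length _ _ _ (h.merge ht hck hF)
    omega

end IsShortestWalk

end Walks

section Loops

variable {n : ℕ} {Pl : Fin n → Setoid Ω} {F : Setoid Ω} {m : ℕ} {x y : ZMod m → Ω}

theorem isLoop_of_injective_blocks (hm : 2 ≤ m) (hckc : ∀ j, ckcRel Pl (x j) (y j))
    (hsep : ∀ j, ¬ F.r (x j) (y j)) (hlink : ∀ j, F.r (y j) (x (j + 1)))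
    (hne : ∀ j, ¬ ckcRel Pl (x j) (x (j + 1))) (hinj : ∀ j j', F.r (y j) (y j') → j = j') :
    IsLoop Pl F m x y where
  two_le := hm
  pair_ne j h := hsep j (h ▸ F.refl' _)
  pair_ckc := hckc
  link := hlink
  ckc_ne := hne
  link_disjoint j j' hjj' := by
    have hblock : ∀ i, ∀ z ∈ ({y i, x (i + 1)} : Set Ω), F.r (y i) z := by
      rintro i z (rfl | rfl)
      exacts [F.refl' _, hlink i]
    exact Set.eq_empty_of_forall_notMem fun z hz =>
      hjj' (hinj j j' (F.trans' (hblock j z hz.1) (F.symm' (hblock j' z hz.2))))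

/-- Each `F`-block meets the loop in at most the two states `y j` and `x (j + 1)`. -/
theorem type2Irreducible_of_injective_blocks (hlink : ∀ j, F.r (y j) (x (j + 1)))
    (hinj : ∀ j j', F.r (y j) (y j') → j = j') : Type2Irreducible F x y := by
  have hrep : ∀ z ∈ loopStates x y, ∃ j, F.r z (y j) := by
    rintro z (⟨i, rfl⟩ | ⟨i, rfl⟩)
    · exact ⟨i - 1, F.symm' (by simpa using hlink (i - 1))⟩
    · exact ⟨i, F.refl' _⟩
  have hblock : ∀ z ∈ loopStates x y, ∀ j, F.r z (y j) → z = y j ∨ z = x (j + 1) := by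
    rintro z (⟨i, rfl⟩ | ⟨i, rfl⟩) j hz
    · have := hinj _ _ (F.trans' (by simpa using hlink (i - 1)) hz)
      exact Or.inr (by rw [← this, sub_add_cancel])
    · exact Or.inl (by rw [hinj _ _ hz])
  rintro ⟨a, b, c, -, ha, hb, hc, -, hab, hac, -, hbc, -, -, hFab, hFac, -⟩
  obtain ⟨j, haj⟩ := hrep a ha
  rcases hblock a ha j haj with rfl | rfl <;>
    rcases hblock b hb j (F.trans' (F.symm' hFab) haj) with rfl | rfl <;>
    rcases hblock c hc j (F.trans' (F.symm' hFac) haj) with rfl | rfl <;>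
    simp_all

theorem forall_lt_mod_succ {P : ℕ → ℕ → Prop} (hm : 0 < m) (h : ∀ t, t + 1 < m → P t (t + 1))
    (hwrap : P (m - 1) 0) : ∀ t < m, P t ((t + 1) % m) := by
  intro t ht
  rcases Nat.lt_or_ge (t + 1) m with h' | h'
  · rw [Nat.mod_eq_of_lt h']; exact h t h'
  · rw [show t + 1 = m by omega, Nat.mod_self, show t = m - 1 by omega]; exact hwrap

theorem IsWalk.rel_mod_succ {A : Set Ω} {p : Ω} {U V : ℕ → Ω} (h : IsWalk Pl F A p p m U V)
    (hm : 0 < m) : ∀ t < m, F.r (V t) (U ((t + 1) % m)) := by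
  refine forall_lt_mod_succ (P := fun t t' => F.r (V t) (U t')) hm
    (fun t ht => h.enter (t + 1) ht) ?_
  have hexit := h.exit
  rw [show m = m - 1 + 1 by omega] at hexit
  exact F.trans' hexit (h.enter 0 hm)

theorem IsWalk.exists_loop {A : Set Ω} {p : Ω} {U V : ℕ → Ω} (h : IsWalk Pl F A p p m U V)
    (hm : 2 ≤ m) (hne : ∀ t < m, ¬ ckcRel Pl (U t) (U ((t + 1) % m)))
    (hinj : ∀ s < m, ∀ t < m, F.r (V s) (V t) → s = t) :
    ∃ L : Loop Pl F, Type2Irreducible F L.x L.y ∧ ∀ t < m, ∃ j, L.x j = U t := by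
  have : NeZero m := ⟨by omega⟩
  have : Fact (1 < m) := ⟨by omega⟩
  have hsucc (j : ZMod m) : (j + 1).val = (j.val + 1) % m := by rw [ZMod.val_add, ZMod.val_one]
  have hlink (j : ZMod m) : F.r (V j.val) (U (j + 1).val) :=
    hsucc j ▸ h.rel_mod_succ (by omega) _ j.val_lt
  have hinj' (j j' : ZMod m) (hF : F.r (V j.val) (V j'.val)) : j = j' :=
    ZMod.val_injective m (hinj _ j.val_lt _ j'.val_lt hF)
  refine ⟨⟨m, fun j => U j.val, fun j => V j.val, isLoop_of_injective_blocks hm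
      (fun j => h.ckc _ j.val_lt) (fun j => h.not_rel _ j.val_lt) hlink
      (fun j => hsucc j ▸ hne _ j.val_lt) hinj'⟩,
    type2Irreducible_of_injective_blocks hlink hinj', fun t ht => ⟨t, ?_⟩⟩
  simp [ZMod.val_natCast, Nat.mod_eq_of_lt ht]

theorem exists_first_crossing {r₁ r₂ : ℕ → Ω} {k₁ k₂ : ℕ} (hk₁ : 0 < k₁)
    (h0 : F.r (r₁ 0) (r₂ 0)) (hend : F.r (r₁ k₁) (r₂ k₂))
    (hinj : ∀ s, 0 < s → s ≤ k₁ → ¬ F.r (r₁ 0) (r₁ s)) :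
    ∃ i k, 0 < i ∧ i ≤ k₁ ∧ 0 < k ∧ k ≤ k₂ ∧ F.r (r₁ i) (r₂ k) ∧
      ∀ s t, 0 < s → s ≤ i → t < k → ¬ F.r (r₁ s) (r₂ t) := by
  have hex₁ : ∃ i, 0 < i ∧ i ≤ k₁ ∧ ∃ t ≤ k₂, F.r (r₁ i) (r₂ t) :=
    ⟨k₁, hk₁, le_rfl, k₂, le_rfl, hend⟩
  obtain ⟨hi, hik₁, hex₂⟩ := Nat.find_spec hex₁
  set i := Nat.find hex₁
  obtain ⟨hkk₂, hcross⟩ := Nat.find_spec hex₂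
  set k := Nat.find hex₂
  have hk : 0 < k := Nat.pos_of_ne_zero fun hk0 =>
    hinj i hi hik₁ (F.trans' h0 (F.symm' (hk0 ▸ hcross)))
  refine ⟨i, k, hi, hik₁, hk, hkk₂, hcross, fun s t hs hsi htk hF => ?_⟩
  rcases hsi.lt_or_eq with hsi | rfl
  · exact Nat.find_min hex₁ hsi ⟨hs, by omega, t, by omega, hF⟩
  · exact Nat.find_min hex₂ htk ⟨by omega, hF⟩

end Loops

section Splice

variable {n : ℕ} {Pl : Fin n → Setoid Ω} {F : Setoid Ω} {A₁ A₂ : Set Ω} {a a' b b' : Ω}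
  {k₁ k₂ i k : ℕ} {U₁ V₁ U₂ V₂ : ℕ → Ω}

def splice (i m : ℕ) (f g : ℕ → Ω) (t : ℕ) : Ω :=
  if t < i then f t else g (m - 1 - t)

theorem isWalk_splice (w₁ : IsWalk Pl F A₁ a a' k₁ U₁ V₁) (w₂ : IsWalk Pl F A₂ b b' k₂ U₂ V₂)
    (hab : F.r a b) (hi : 0 < i) (hik₁ : i ≤ k₁) (hk : 0 < k) (hkk₂ : k ≤ k₂)
    (hcross : F.r (seqCons a V₁ i) (seqCons b V₂ k)) :
    IsWalk Pl F (A₁ ∪ A₂) a a (i + k) (splice i (i + k) U₁ V₂) (splice i (i + k) V₁ U₂) where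
  mem_left t ht := by
    unfold splice; split_ifs
    exacts [Or.inl (w₁.mem_left t (by omega)), Or.inr (w₂.mem_right _ (by omega))]
  mem_right t ht := by
    unfold splice; split_ifs
    exacts [Or.inl (w₁.mem_right t (by omega)), Or.inr (w₂.mem_left _ (by omega))]
  ckc t ht := by
    unfold splice; split_ifs
    exacts [w₁.ckc t (by omega), (w₂.ckc _ (by omega)).symm]
  not_rel t ht := by
    unfold splice; split_ifs
    exacts [w₁.not_rel t (by omega), fun h => w₂.not_rel _ (by omega) (F.symm' h)]
  enter t ht := by
    obtain ⟨k, rfl⟩ : ∃ k', k = k' + 1 := ⟨k - 1, by omega⟩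
    rcases t with _ | t
    · simpa [splice, hi] using w₁.enter 0 (by omega)
    · simp only [seqCons_succ, splice]
      rcases lt_trichotomy (t + 1) i with hti | rfl | hti
      · rw [if_pos (by omega), if_pos hti]; exact w₁.enter (t + 1) (by omega)
      · rw [if_pos (by omega), if_neg (by omega), show t + 1 + (k + 1) - 1 - (t + 1) = k by
          omega]
        exact hcross
      · have := w₂.enter (i + (k + 1) - 1 - t) (by omega)
        rw [show i + (k + 1) - 1 - t = i + (k + 1) - 1 - (t + 1) + 1 by omega,
          seqCons_succ] at this
        rw [if_neg (by omega), if_neg (by omega), ← show i + (k + 1) - 1 - (t + 1) + 1 =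
          i + (k + 1) - 1 - t by omega]
        exact F.symm' this
  exit := by
    rw [show i + k = i + k - 1 + 1 by omega, seqCons_succ, splice, if_neg (by omega),
      show i + k - 1 + 1 - 1 - (i + k - 1) = 0 by omega]
    exact F.symm' (F.trans' hab (w₂.enter 0 (by omega)))

theorem splice_injective_blocks (w₁ : IsShortestWalk Pl F A₁ a a' k₁ U₁ V₁)
    (w₂ : IsShortestWalk Pl F A₂ b b' k₂ U₂ V₂) (hik₁ : i ≤ k₁) (hkk₂ : k ≤ k₂)
    (hmin : ∀ s t, 0 < s → s ≤ i → t < k → ¬ F.r (seqCons a V₁ s) (seqCons b V₂ t)) :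
    ∀ s < i + k, ∀ t < i + k,
      F.r (splice i (i + k) V₁ U₂ s) (splice i (i + k) V₁ U₂ t) → s = t := by
  have hU₂ (r : ℕ) (hr : r < k₂) : F.r (U₂ r) (seqCons b V₂ r) := F.symm' (w₂.enter r hr)
  suffices h : ∀ s t, s < t → t < i + k →
      ¬ F.r (splice i (i + k) V₁ U₂ s) (splice i (i + k) V₁ U₂ t) by
    intro s hs t ht hF
    rcases lt_trichotomy s t with hst | hst | hst
    exacts [(h s t hst ht hF).elim, hst, (h t s hst hs (F.symm' hF)).elim]
  intro s t hst ht hF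
  unfold splice at hF
  by_cases hti : t < i
  · rw [if_pos (by omega), if_pos hti] at hF
    exact w₁.not_rel_seqCons (s := s + 1) (t := t + 1) (by omega) (by omega) hF
  by_cases hsi : s < i
  · rw [if_pos hsi, if_neg hti] at hF
    exact hmin (s + 1) _ (by omega) (by omega) (by omega) (F.trans' hF (hU₂ _ (by omega)))
  · rw [if_neg hsi, if_neg hti] at hF
    exact w₂.not_rel_seqCons (s := i + k - 1 - t) (t := i + k - 1 - s) (by omega) (by omega)
      (F.trans' (F.symm' (hU₂ _ (by omega))) (F.trans' (F.symm' hF) (hU₂ _ (by omega))))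

theorem splice_not_ckcRel_succ (w₁ : IsShortestWalk Pl F A₁ a a' k₁ U₁ V₁)
    (w₂ : IsShortestWalk Pl F A₂ b b' k₂ U₂ V₂) (hdisj : Disjoint A₁ A₂)
    (hcl : ∀ u ∈ A₁, ∀ w, ckcRel Pl u w → w ∈ A₁)
    (hi : 0 < i) (hik₁ : i ≤ k₁) (hk : 0 < k) (hkk₂ : k ≤ k₂) :
    ∀ t < i + k,
      ¬ ckcRel Pl (splice i (i + k) U₁ V₂ t) (splice i (i + k) U₁ V₂ ((t + 1) % (i + k))) := by
  have hsep {u v : Ω} (hu : u ∈ A₁) (hv : v ∈ A₂) : ¬ ckcRel Pl u v := fun h =>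
    Set.disjoint_left.mp hdisj (hcl u hu v h) hv
  refine forall_lt_mod_succ (P := fun t t' => ¬ ckcRel Pl (splice i (i + k) U₁ V₂ t)
    (splice i (i + k) U₁ V₂ t')) (by omega) (fun t ht => ?_) ?_
  · simp only [splice]
    rcases lt_trichotomy (t + 1) i with hti | rfl | hti
    · rw [if_pos (by omega), if_pos hti]; exact w₁.not_ckcRel_succ (by omega)
    · rw [if_pos (by omega), if_neg (by omega)]
      exact hsep (w₁.mem_left t (by omega)) (w₂.mem_right _ (by omega))
    · rw [if_neg (by omega), if_neg (by omega),
        show i + k - 1 - t = i + k - 1 - (t + 1) + 1 by omega]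
      intro hck
      exact w₂.not_ckcRel_succ (t := i + k - 1 - (t + 1)) (by omega)
        ((w₂.ckc _ (by omega)).trans (hck.symm.trans (w₂.ckc _ (by omega)).symm))
  · simp only [splice]
    rw [if_neg (by omega), if_pos hi]
    exact fun h => hsep (w₁.mem_left 0 (by omega)) (w₂.mem_right _ (by omega)) h.symm

theorem exists_type2Irreducible_loop_meeting (hdisj : Disjoint A₁ A₂)
    (hcl : ∀ u ∈ A₁, ∀ w, ckcRel Pl u w → w ∈ A₁) (hab : F.r a b) (hab' : F.r a' b')
    (haa' : ¬ F.r a a') (h₁ : ∃ k U V, IsWalk Pl F A₁ a a' k U V)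
    (h₂ : ∃ k U V, IsWalk Pl F A₂ b b' k U V) :
    ∃ L : Loop Pl F, Type2Irreducible F L.x L.y ∧ (∃ j, L.x j ∈ A₁) ∧ (∃ j, L.x j ∈ A₂) := by
  obtain ⟨k₁, U₁, V₁, w₁⟩ := IsWalk.exists_isShortestWalk h₁
  obtain ⟨k₂, U₂, V₂, w₂⟩ := IsWalk.exists_isShortestWalk h₂
  have hk₁ : 0 < k₁ := Nat.pos_of_ne_zero fun h0 => haa' (by subst h0; exact w₁.exit)
  obtain ⟨i, k, hi, hik₁, hk, hkk₂, hcross, hmin⟩ :=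
    exists_first_crossing (r₁ := seqCons a V₁) (r₂ := seqCons b V₂) hk₁ hab
      (F.trans' w₁.exit (F.trans' hab' (F.symm' w₂.exit)))
      (fun s hs hsk => w₁.not_rel_seqCons hs hsk)
  obtain ⟨L, hL, hxL⟩ :=
    (isWalk_splice w₁.toIsWalk w₂.toIsWalk hab hi hik₁ hk hkk₂ hcross).exists_loop (by omega)
      (splice_not_ckcRel_succ w₁ w₂ hdisj hcl hi hik₁ hk hkk₂)
      (splice_injective_blocks w₁ w₂ hik₁ hkk₂ hmin)
  obtain ⟨j₁, hj₁⟩ := hxL 0 (by omega)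
  obtain ⟨j₂, hj₂⟩ := hxL (i + k - 1) (by omega)
  refine ⟨L, hL, ⟨j₁, ?_⟩, ⟨j₂, ?_⟩⟩
  · rw [hj₁, splice, if_pos hi]; exact w₁.mem_left 0 (by omega)
  · rw [hj₂, splice, if_neg (by omega)]; exact w₂.mem_right _ (by omega)

end Splice

section Clusters

variable {n : ℕ} {Pl : Fin n → Setoid Ω} {F : Setoid Ω}

theorem ShareCKC.symm {L L' : Loop Pl F} (h : ShareCKC L L') : ShareCKC L' L :=
  let ⟨j, j', hj⟩ := h
  ⟨j', j, hj.symm⟩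

theorem reflTransGen_shareCKC_mono {𝒟 ℰ : Set (Loop Pl F)} (h : 𝒟 ⊆ ℰ) {L L' : Loop Pl F}
    (hL : Relation.ReflTransGen (fun a b => a ∈ 𝒟 ∧ b ∈ 𝒟 ∧ ShareCKC a b) L L') :
    Relation.ReflTransGen (fun a b => a ∈ ℰ ∧ b ∈ ℰ ∧ ShareCKC a b) L L' :=
  Relation.ReflTransGen.mono (fun _ _ hab => ⟨h hab.1, h hab.2.1, hab.2.2⟩) _ _ hL

theorem mem_clusterOf_of_ckcRel {𝒜 : Set (Loop Pl F)} {u w : Ω} (hu : u ∈ clusterOf 𝒜)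
    (h : ckcRel Pl u w) : w ∈ clusterOf 𝒜 :=
  let ⟨L, hL, j, hj⟩ := hu
  ⟨L, hL, j, h.symm.trans hj⟩

theorem x_mem_clusterOf {𝒜 : Set (Loop Pl F)} {L : Loop Pl F} (hL : L ∈ 𝒜) (j : ZMod L.m) :
    L.x j ∈ clusterOf 𝒜 :=
  ⟨L, hL, j, ckcRel.refl _⟩

theorem y_mem_clusterOf {𝒜 : Set (Loop Pl F)} {L : Loop Pl F} (hL : L ∈ 𝒜) (j : ZMod L.m) :
    L.y j ∈ clusterOf 𝒜 :=
  ⟨L, hL, j, (L.isLoop.pair_ckc j).symm⟩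

theorem reflTransGen_walkStep_of_mem_loop {𝒜 : Set (Loop Pl F)} {L : Loop Pl F} (hL : L ∈ 𝒜)
    (j j' : ZMod L.m) : Relation.ReflTransGen (WalkStep Pl F (clusterOf 𝒜)) (L.x j) (L.x j') := by
  have hsucc (i : ZMod L.m) :
      Relation.ReflTransGen (WalkStep Pl F (clusterOf 𝒜)) (L.x i) (L.x (i + 1)) :=
    .head ⟨x_mem_clusterOf hL i, y_mem_clusterOf hL i, .inl (L.isLoop.pair_ckc i)⟩
      (.single ⟨y_mem_clusterOf hL i, x_mem_clusterOf hL (i + 1), .inr (L.isLoop.link i)⟩)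
  have hiter (c : ℕ) :
      Relation.ReflTransGen (WalkStep Pl F (clusterOf 𝒜)) (L.x j) (L.x (j + c)) := by
    induction c with
    | zero => simpa using .refl
    | succ c ih => simpa [add_assoc] using ih.trans (hsucc _)
  have : NeZero L.m := ⟨by have := L.isLoop.two_le; omega⟩
  simpa using hiter (j' - j).val

theorem IsConnectedFamily.reflTransGen_walkStep {𝒜 : Set (Loop Pl F)}
    (h𝒜 : IsConnectedFamily 𝒜) {u v : Ω} (hu : u ∈ clusterOf 𝒜) (hv : v ∈ clusterOf 𝒜) :
    Relation.ReflTransGen (WalkStep Pl F (clusterOf 𝒜)) u v := by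
  obtain ⟨L, hL, j, hj⟩ := hu
  obtain ⟨L', hL', j', hj'⟩ := hv
  have hchain : ∀ N, Relation.ReflTransGen (fun a b => a ∈ 𝒜 ∧ b ∈ 𝒜 ∧ ShareCKC a b) L N →
      ∀ i, Relation.ReflTransGen (WalkStep Pl F (clusterOf 𝒜)) (L.x j) (N.x i) := by
    intro N hLN
    induction hLN with
    | refl => exact reflTransGen_walkStep_of_mem_loop hL j
    | tail _ hstep ih =>
      obtain ⟨hM, hN, i₁, i₂, hck⟩ := hstep
      exact fun i => (ih i₁).trans (.head ⟨x_mem_clusterOf hM i₁, x_mem_clusterOf hN i₂,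
        .inl hck⟩ (reflTransGen_walkStep_of_mem_loop hN i₂ i))
  exact .head ⟨⟨L, hL, j, hj⟩, x_mem_clusterOf hL j, .inl hj⟩ <|
    (hchain L' (h𝒜.2 L hL L' hL') j').trans
      (.single ⟨x_mem_clusterOf hL' j', ⟨L', hL', j', hj'⟩, .inl hj'.symm⟩)

theorem exists_isMaximalConnectedFamily {L : Loop Pl F} (hL : Type2Irreducible F L.x L.y) :
    ∃ 𝒜, IsMaximalConnectedFamily 𝒜 ∧ L ∈ 𝒜 := by
  let S := {ℬ : Set (Loop Pl F) | IsConnectedFamily ℬ ∧ L ∈ ℬ}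
  have hchain : ∀ c ⊆ S, IsChain (· ⊆ ·) c → c.Nonempty → ∃ ub ∈ S, ∀ s ∈ c, s ⊆ ub := by
    intro c hcS hc ⟨ℬ₀, hℬ₀⟩
    refine ⟨⋃₀ c, ⟨⟨?_, ?_⟩, Set.subset_sUnion_of_mem hℬ₀ (hcS hℬ₀).2⟩,
      fun s hs => Set.subset_sUnion_of_mem hs⟩
    · rintro M ⟨ℬ, hℬ, hM⟩
      exact (hcS hℬ).1.1 M hM
    · rintro M ⟨ℬ₁, hℬ₁, hM⟩ M' ⟨ℬ₂, hℬ₂, hM'⟩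
      rcases hc.total hℬ₁ hℬ₂ with h | h
      · exact reflTransGen_shareCKC_mono (Set.subset_sUnion_of_mem hℬ₂)
          ((hcS hℬ₂).1.2 M (h hM) M' hM')
      · exact reflTransGen_shareCKC_mono (Set.subset_sUnion_of_mem hℬ₁)
          ((hcS hℬ₁).1.2 M hM M' (h hM'))
  have hsingle : IsConnectedFamily ({L} : Set (Loop Pl F)) :=
    ⟨by rintro M rfl; exact hL, by rintro M rfl M' rfl; exact .refl⟩
  obtain ⟨𝒜, hL𝒜, hmax⟩ := zorn_subset_nonempty S hchain {L} ⟨hsingle, rfl⟩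
  exact ⟨𝒜, ⟨⟨L, hL𝒜 rfl⟩, hmax.prop.1,
    fun ℬ hℬ h𝒜ℬ => (hmax.eq_of_le ⟨hℬ, h𝒜ℬ (hL𝒜 rfl)⟩ h𝒜ℬ).symm⟩, hL𝒜 rfl⟩

theorem IsMaximalConnectedFamily.eq_of_shareCKC {𝒜 ℬ : Set (Loop Pl F)}
    (h𝒜 : IsMaximalConnectedFamily 𝒜) (hℬ : IsMaximalConnectedFamily ℬ) {L M : Loop Pl F}
    (hL : L ∈ 𝒜) (hM : M ∈ ℬ) (h : ShareCKC L M) : 𝒜 = ℬ := by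
  let R := fun a b : Loop Pl F => a ∈ 𝒜 ∪ ℬ ∧ b ∈ 𝒜 ∪ ℬ ∧ ShareCKC a b
  have h𝒜' {N N'} (hN : N ∈ 𝒜) (hN' : N' ∈ 𝒜) : Relation.ReflTransGen R N N' :=
    reflTransGen_shareCKC_mono Set.subset_union_left (h𝒜.2.1.2 N hN N' hN')
  have hℬ' {N N'} (hN : N ∈ ℬ) (hN' : N' ∈ ℬ) : Relation.ReflTransGen R N N' :=
    reflTransGen_shareCKC_mono Set.subset_union_right (hℬ.2.1.2 N hN N' hN')
  have hLM : Relation.ReflTransGen R L M := .single ⟨.inl hL, .inr hM, h⟩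
  have hML : Relation.ReflTransGen R M L := .single ⟨.inr hM, .inl hL, h.symm⟩
  have hunion : IsConnectedFamily (𝒜 ∪ ℬ) := by
    refine ⟨fun N hN => hN.elim (h𝒜.2.1.1 N) (hℬ.2.1.1 N), ?_⟩
    rintro N (hN | hN) N' (hN' | hN')
    · exact h𝒜' hN hN'
    · exact ((h𝒜' hN hL).trans hLM).trans (hℬ' hM hN')
    · exact ((hℬ' hN hM).trans hML).trans (h𝒜' hL hN')
    · exact hℬ' hN hN'
  exact (h𝒜.2.2 _ hunion Set.subset_union_left).symm.trans (hℬ.2.2 _ hunion Set.subset_union_right)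

end Clusters

section OmegaStar

variable {n : ℕ} {Pl : Fin n → Setoid Ω} {F : Setoid Ω} {A B : Set Ω}

theorem mem_of_mem_omegaStar_of_ckcRel (hA : A ∈ OmegaStar Pl F) {u w : Ω} (hu : u ∈ A)
    (h : ckcRel Pl u w) : w ∈ A := by
  rcases hA with ⟨𝒜, -, rfl⟩ | ⟨⟨ω, rfl⟩, -⟩
  exacts [mem_clusterOf_of_ckcRel hu h, ckcRel.trans hu h]

theorem exists_isWalk_of_mem_omegaStar (hA : A ∈ OmegaStar Pl F) {u v : Ω} (hu : u ∈ A)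
    (hv : v ∈ A) : ∃ k U V, IsWalk Pl F A u v k U V := by
  refine IsWalk.exists_of_reflTransGen ?_
  rcases hA with ⟨𝒜, h𝒜, rfl⟩ | ⟨⟨ω, rfl⟩, -⟩
  · exact h𝒜.2.1.reflTransGen_walkStep hu hv
  · exact .single ⟨hu, hv, .inl (ckcRel.symm hu |>.trans hv)⟩

theorem nonempty_of_mem_omegaStar (hA : A ∈ OmegaStar Pl F) : A.Nonempty := by
  rcases hA with ⟨𝒜, ⟨⟨L, hL⟩, -⟩, rfl⟩ | ⟨⟨ω, rfl⟩, -⟩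
  · have : NeZero L.m := ⟨by have := L.isLoop.two_le; omega⟩
    exact ⟨L.x 0, x_mem_clusterOf hL 0⟩
  · exact ⟨ω, ckcRel.refl ω⟩

theorem disjoint_of_mem_omegaStar (hA : A ∈ OmegaStar Pl F) (hB : B ∈ OmegaStar Pl F)
    (hAB : A ≠ B) : Disjoint A B := by
  refine Set.disjoint_left.mpr fun z hzA hzB => hAB ?_
  rcases hA with ⟨𝒜, h𝒜, rfl⟩ | ⟨⟨ω, rfl⟩, hA⟩ <;>
    rcases hB with ⟨ℬ, hℬ, rfl⟩ | ⟨⟨ω', rfl⟩, hB⟩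
  · obtain ⟨L, hL, j, hj⟩ := hzA
    obtain ⟨M, hM, j', hj'⟩ := hzB
    rw [h𝒜.eq_of_shareCKC hℬ hL hM ⟨j, j', hj.symm.trans hj'⟩]
  · exact (hB _ ⟨𝒜, h𝒜, rfl⟩ fun w hw =>
      mem_clusterOf_of_ckcRel hzA (ckcRel.trans hzB.symm hw)).elim
  · exact (hA _ ⟨ℬ, hℬ, rfl⟩ fun w hw =>
      mem_clusterOf_of_ckcRel hzB (ckcRel.trans hzA.symm hw)).elim
  · ext w
    exact ⟨fun hw => ckcRel.trans hzB (ckcRel.trans hzA.symm hw),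
      fun hw => ckcRel.trans hzA (ckcRel.trans hzB.symm hw)⟩

theorem sUnion_omegaStar : ⋃₀ OmegaStar Pl F = Set.univ := by
  refine Set.eq_univ_of_forall fun ω => ?_
  by_cases h : ∃ D, IsCluster Pl F D ∧ {ω' | ckcRel Pl ω ω'} ⊆ D
  · obtain ⟨D, hD, hωD⟩ := h
    exact ⟨D, .inl hD, hωD (ckcRel.refl ω)⟩
  · exact ⟨_, .inr ⟨⟨ω, rfl⟩, fun D hD hωD => h ⟨D, hD, hωD⟩⟩, ckcRel.refl ω⟩

theorem eq_of_mem_omegaStar_of_mem_loop (hA : A ∈ OmegaStar Pl F) (hB : B ∈ OmegaStar Pl F)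
    {L : Loop Pl F} (hL : Type2Irreducible F L.x L.y) {j j' : ZMod L.m} (hjA : L.x j ∈ A)
    (hjB : L.x j' ∈ B) : A = B := by
  obtain ⟨𝒜, h𝒜, hL𝒜⟩ := exists_isMaximalConnectedFamily hL
  have hC : clusterOf 𝒜 ∈ OmegaStar Pl F := .inl ⟨𝒜, h𝒜, rfl⟩
  have heq {D : Set Ω} (hD : D ∈ OmegaStar Pl F) {i : ZMod L.m} (hi : L.x i ∈ D) :
      D = clusterOf 𝒜 := by
    by_contra hne
    exact Set.disjoint_left.mp (disjoint_of_mem_omegaStar hD hC hne) hi (x_mem_clusterOf hL𝒜 i)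
  rw [heq hA hjA, heq hB hjB]

end OmegaStar

theorem omegaStar_partition_and_single_connection_general
    {Ω : Type} {n : ℕ}
    (Pl : Fin n → Setoid Ω) (F₁ : Setoid Ω) :
    ((∀ A ∈ OmegaStar Pl F₁, A.Nonempty) ∧
      (∀ A ∈ OmegaStar Pl F₁, ∀ B ∈ OmegaStar Pl F₁, A ≠ B → Disjoint A B) ∧
      ⋃₀ OmegaStar Pl F₁ = Set.univ) ∧
    ∀ A₁ ∈ OmegaStar Pl F₁, ∀ A₂ ∈ OmegaStar Pl F₁, A₁ ≠ A₂ →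
      ∀ ω ω' : Ω,
        ({z | F₁.r ω z} ∩ A₁).Nonempty → ({z | F₁.r ω z} ∩ A₂).Nonempty →
        ({z | F₁.r ω' z} ∩ A₁).Nonempty → ({z | F₁.r ω' z} ∩ A₂).Nonempty →
        F₁.r ω ω' := by
  refine ⟨⟨fun A hA => nonempty_of_mem_omegaStar hA,
    fun A hA B hB => disjoint_of_mem_omegaStar hA hB, sUnion_omegaStar⟩, ?_⟩
  rintro A₁ hA₁ A₂ hA₂ hne ω ω' ⟨a, hωa, ha⟩ ⟨b, hωb, hb⟩ ⟨a', hωa', ha'⟩ ⟨b', hωb', hb'⟩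
  by_contra hωω'
  obtain ⟨L, hL, ⟨j₁, hj₁⟩, ⟨j₂, hj₂⟩⟩ := exists_type2Irreducible_loop_meeting
    (disjoint_of_mem_omegaStar hA₁ hA₂ hne)
    (fun u hu w h => mem_of_mem_omegaStar_of_ckcRel hA₁ hu h)
    (F₁.trans' (F₁.symm' hωa) hωb) (F₁.trans' (F₁.symm' hωa') hωb')
    (fun h => hωω' (F₁.trans' hωa (F₁.trans' h (F₁.symm' hωa'))))
    (exists_isWalk_of_mem_omegaStar hA₁ ha ha') (exists_isWalk_of_mem_omegaStar hA₂ hb hb')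
  exact hne (eq_of_mem_omegaStar_of_mem_loop hA₁ hA₂ hL hj₁ hj₂)

/-- **Observation (the partition `Ω*`).**
Let `Ω*` be the collection of all clusters together with all CKCs not contained
in any cluster. Then `Ω*` is a partition of `Ω`, and for any two distinct
elements `A₁, A₂` of `Ω*` there is at most one block of `F₁` meeting both `A₁`
and `A₂` (any two blocks of `F₁` each meeting both `A₁` and `A₂` coincide). -/
theorem omegaStar_partition_and_single_connection
    {Ω : Type} [Fintype Ω] [Nonempty Ω] {n : ℕ} (hn : 2 ≤ n)
    (Pl : Fin n → Setoid Ω) (F₁ : Setoid Ω) :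
    ((∀ A ∈ OmegaStar Pl F₁, A.Nonempty) ∧
      (∀ A ∈ OmegaStar Pl F₁, ∀ B ∈ OmegaStar Pl F₁, A ≠ B → Disjoint A B) ∧
      ⋃₀ OmegaStar Pl F₁ = Set.univ) ∧
    ∀ A₁ ∈ OmegaStar Pl F₁, ∀ A₂ ∈ OmegaStar Pl F₁, A₁ ≠ A₂ →
      ∀ ω ω' : Ω,
        ({z | F₁.r ω z} ∩ A₁).Nonempty → ({z | F₁.r ω z} ∩ A₂).Nonempty →
        ({z | F₁.r ω' z} ∩ A₁).Nonempty → ({z | F₁.r ω' z} ∩ A₂).Nonempty →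
        F₁.r ω ω' :=
  omegaStar_partition_and_single_connection_general Pl F₁

end Oracles
end
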